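/- arXiv:1401.7948 — 12 statements merged into one kernel-verified Lean document; each statement's English description precedes it below -/
import Mathlib

section
/- If λ^κ = λ for infinite cardinals κ ≤ λ, then the cofinality of the partial order of all functions from λ to κ ordered by everywhere domination (f ≤ g iff f(α) ≤ g(α) for every α < λ) equals 2^λ. -/
open Cardinal Order

/-- The cofinality of the everywhere (pointwise) domination order on functions `X → K`. -/
noncomputable def everyCof (X K : Type*) [LE K] : Cardinal :=
  sInf {c | ∃ D : Set (X → K), #D = c ∧ ∀ f : X → K, ∃ g ∈ D, ∀ x, f x ≤ g x}

/-- The cofinality of the eventual domination order on functions `X → K`. -/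
noncomputable def evenCof (X K : Type*) [LE X] [LE K] : Cardinal :=
  sInf {c | ∃ D : Set (X → K), #D = c ∧
    ∀ f : X → K, ∃ g ∈ D, ∃ a : X, ∀ b : X, a ≤ b → f b ≤ g b}

/-!
The whole of `L → K` is a dominating family, of size `κ ^ λ = 2 ^ λ`.
Conversely, since `λ ^ κ = λ` there is an injection `ι : (K → L) × (K → K) ↪ L`. Code each
`X : L → K` by the function `L → K` sending `ι (p, q)` to the first `δ` with `X (p δ) ≠ q δ`.
For a fixed bound `g`, a diagonal recursion of length `κ` shows that every `X` whose code lies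
below `g` is determined among all such `X` by its trace on some `κ`-sequence of points; as there
are only `λ` such traces, at most `λ` functions have their code below `g`. Hence a dominating
family `D` satisfies `2 ^ λ ≤ #D * λ`, i.e. `2 ^ λ ≤ #D`.
-/

namespace EveryCof

open Function

universe u

theorem everyCof_le_mk {X K : Type u} [Preorder K] : everyCof X K ≤ #(X → K) :=
  csInf_le' ⟨Set.univ, mk_univ, fun f => ⟨f, Set.mem_univ f, fun _ => le_rfl⟩⟩

theorem le_everyCof {X K : Type u} [Preorder K] {c : Cardinal}
    (h : ∀ D : Set (X → K), (∀ f : X → K, ∃ g ∈ D, f ≤ g) → c ≤ #D) : c ≤ everyCof X K :=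
  le_csInf ⟨_, _, rfl, fun f => ⟨f, Set.mem_univ f, fun _ => le_rfl⟩⟩ <| by
    rintro _ ⟨D, rfl, hD⟩
    exact h D hD

theorem le_of_le_mul_of_lt {a b c : Cardinal} (hb : ℵ₀ ≤ b) (hba : b < a) (h : a ≤ c * b) :
    a ≤ c :=
  (le_max_iff.mp (h.trans (mul_le_max_of_aleph0_le_right hb))).resolve_right hba.not_ge

theorem exists_seq_eq_apply_restrict {K L : Type*} [LT K] [WellFoundedLT K] [DecidableLT K]
    (x₀ : L) (c : K → (K → L) → L) :
    ∃ p : K → L, ∀ δ, p δ = c δ fun l => if l < δ then p l else x₀ :=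
  ⟨wellFounded_lt.fix fun δ ih => c δ fun l => if h : l < δ then ih l h else x₀,
    fun δ => wellFounded_lt.fix_eq _ δ⟩

theorem mk_le_of_determined {K L β : Type u} {S : Set (L → β)}
    (h : ∀ X ∈ S, ∃ p : K → L, ∀ Z ∈ S, Z ∘ p = X ∘ p → Z = X) :
    #S ≤ #((K → L) × (K → β)) := by
  choose p hp using h
  refine mk_le_of_injective (f := fun X : S => (p X X.2, X.1 ∘ p X X.2)) ?_
  rintro ⟨X, hX⟩ ⟨Y, hY⟩ hXY
  obtain ⟨hp_eq, htrace⟩ := Prod.ext_iff.mp hXY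
  dsimp only at hp_eq htrace
  rw [hp_eq] at htrace
  exact Subtype.ext (hp Y hY X hX htrace)

variable {K L β : Type u} [LinearOrder K] [WellFoundedLT K] [Nonempty K]

open Classical in
noncomputable def firstDiff (X : L → β) (c : (K → L) × (K → β)) : K :=
  if h : ∃ δ, X (c.1 δ) ≠ c.2 δ then wellFounded_lt.min {δ | X (c.1 δ) ≠ c.2 δ} h
  else Classical.arbitrary K

theorem firstDiff_eq {X : L → β} {p : K → L} {q : K → β} {δ : K} (hδ : X (p δ) ≠ q δ)
    (hlt : ∀ l < δ, X (p l) = q l) : firstDiff X (p, q) = δ := by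
  rw [firstDiff, dif_pos ⟨δ, hδ⟩]
  exact wellFounded_lt.min_eq_of_forall_not_lt hδ fun l hl hlδ => hl (hlt l hlδ)

noncomputable def diagCode (ι : (K → L) × (K → β) → L) (X : L → β) : L → K :=
  extend ι (firstDiff X) fun _ => Classical.arbitrary K

variable {ι : (K → L) × (K → β) → L}

theorem exists_determining_seq [NoMaxOrder K] [Nonempty L] (hι : Injective ι) (g : L → K)
    (X : L → β) : ∃ p : K → L, ∀ Z, diagCode ι Z ≤ g → Z ∘ p = X ∘ p → Z = X := by
  by_contra! hcon
  -- Choose, by recursion on `δ`, points `p δ` and functions `W (r δ)` with code below `g` that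
  -- agree with `X` at `p l` for `l < δ` but not at `p δ`: the code of `W (r δ)` then takes the
  -- value `δ` at `ι (p, X ∘ p)`, so `g` would have no bound there.
  choose W hWg hWp hWX using hcon
  choose pt hpt using fun p => ne_iff.mp (hWX p)
  obtain ⟨p, hp⟩ := exists_seq_eq_apply_restrict (Classical.arbitrary L) fun _ => pt
  let r (δ : K) : K → L := fun l => if l < δ then p l else Classical.arbitrary L
  have hcode (δ : K) : diagCode ι (W (r δ)) (ι (p, X ∘ p)) = δ := by
    rw [diagCode, hι.extend_apply]
    refine firstDiff_eq ?_ fun l hl => ?_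
    · rw [comp_apply, hp δ]
      exact hpt (r δ)
    · simpa [r, hl] using congrFun (hWp (r δ)) l
  obtain ⟨δ, hδ⟩ := exists_gt (g (ι (p, X ∘ p)))
  exact hδ.not_ge (hcode δ ▸ hWg _ _)

theorem mk_arrow_le_mul_of_dominating [NoMaxOrder K] [Nonempty L] (ι : (K → L) × (K → β) ↪ L)
    {D : Set (L → K)} (hD : ∀ f : L → K, ∃ g ∈ D, f ≤ g) : #(L → β) ≤ #D * #L := by
  have hfiber (g : L → K) : #{X | diagCode ι X ≤ g} ≤ #L :=
    (mk_le_of_determined fun X _ => (exists_determining_seq ι.injective g X).imp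
      fun _ hp Z hZ => hp Z hZ).trans (mk_le_of_injective ι.injective)
  calc #(L → β) ≤ #(⋃ g : D, {X | diagCode ι X ≤ g}) := by
        rw [← mk_univ]
        refine mk_le_mk_of_subset fun X _ => ?_
        obtain ⟨g, hg, hXg⟩ := hD (diagCode ι X)
        exact Set.mem_iUnion.2 ⟨⟨g, hg⟩, hXg⟩
    _ ≤ sum fun g : D => #{X | diagCode ι X ≤ g} := mk_iUnion_le_sum_mk
    _ ≤ sum fun _ : D => #L := sum_le_sum _ _ fun g => hfiber g
    _ = #D * #L := sum_const' _ _

end EveryCof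

open EveryCof in
theorem stmt_0 (k l : Cardinal) (hk : ℵ₀ ≤ k) (hkl : k ≤ l) (h : l ^ k = l) :
    everyCof l.ord.ToType k.ord.ToType = 2 ^ l := by
  set L := l.ord.ToType
  set K := k.ord.ToType
  have hl : ℵ₀ ≤ l := hk.trans hkl
  have hL : #L = l := mk_ord_toType l
  have hK : #K = k := mk_ord_toType k
  have : NoMaxOrder K := noMaxOrder hk
  have : Nonempty L := mk_ne_zero_iff.mp (hL ▸ (aleph0_pos.trans_le hl).ne')
  have : Nonempty K := mk_ne_zero_iff.mp (hK ▸ (aleph0_pos.trans_le hk).ne')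
  have hfun : #(L → K) = 2 ^ l := by
    rw [mk_arrow, lift_id, lift_id, hL, hK]
    exact power_eq_two_power hl (ofNat_le_aleph0.trans hk) hkl
  have hcodes : #((K → L) × (K → K)) ≤ #L := by
    simp only [mk_prod, mk_arrow, lift_id, hL, hK, h]
    calc l * k ^ k ≤ l * l := mul_le_mul_right (h ▸ power_le_power_right hkl) l
      _ = l := mul_eq_self hl
  obtain ⟨ι⟩ := (le_def _ _).mp hcodes
  refine le_antisymm (everyCof_le_mk.trans_eq hfun) (le_everyCof fun D hD => ?_)
  have hbound := mk_arrow_le_mul_of_dominating ι hD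
  rw [hfun, hL] at hbound
  exact le_of_le_mul_of_lt hl (cantor l) hbound
end

section
/- For all infinite cardinals κ ≤ λ with κ regular, any cofinal family in the eventual domination order on ^λκ has cardinality at least λ⁺; that is, cf(⟨^λκ, ≤*⟩) ≥ λ⁺, where f ≤* g iff there exists α < λ such that f(β) ≤ g(β) for all β ≥ α. -/
open Cardinal Order

/-! A family `D` of at most `λ` functions `λ → κ` cannot be cofinal: enumerate `D` along `λ` so
that every member is listed unboundedly often (possible since `λ × λ ≃ λ` and every proper initial
segment of `λ` is small), and let `f(β)` exceed the value at `β` of the member listed at `β`.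
Then every `g ∈ D` lies strictly below `f` unboundedly often, so no `g ∈ D` dominates `f`
eventually. -/

open Set

universe u v w

section Diagonal

variable {T : Type u} [LinearOrder T] [Infinite T]

theorem exists_enum_unbounded_fibers (hT : ∀ a : T, #(Iio a) < #T) {D : Type w} [Nonempty D]
    (hD : lift.{u} #D ≤ lift.{w} #T) :
    ∃ idx : T → D, ∀ d a, ∃ b, a ≤ b ∧ idx b = d := by
  obtain ⟨φ⟩ : Nonempty (T ≃ T × T) :=
    Cardinal.eq.mp (by simp [mk_prod, mul_eq_self (aleph0_le_mk T)])
  obtain ⟨e⟩ := lift_mk_le'.mp hD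
  refine ⟨fun t => Function.invFun e (φ t).1, fun d a => ?_⟩
  obtain ⟨i, rfl⟩ := Function.invFun_surjective e.injective d
  have hfiber : #(range fun t => φ.symm (i, t)) = #T :=
    mk_range_eq _ (φ.symm.injective.comp (Prod.mk_right_injective i))
  obtain ⟨_, ⟨t, rfl⟩, hge⟩ := not_subset.mp fun hsub =>
    (mk_le_mk_of_subset hsub).not_gt (hfiber ▸ hT a)
  exact ⟨_, not_lt.mp hge, by simp⟩

theorem exists_frequently_gt_of_mk_le (hT : ∀ a : T, #(Iio a) < #T) {K : Type v} [Preorder K]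
    [NoMaxOrder K] {D : Set (T → K)} (hne : D.Nonempty) (hD : #D ≤ lift #T) :
    ∃ f : T → K, ∀ g ∈ D, ∀ a, ∃ b, a ≤ b ∧ g b < f b := by
  have := hne.to_subtype
  obtain ⟨idx, hidx⟩ := exists_enum_unbounded_fibers hT (D := D) (by rwa [lift_id', lift_umax])
  choose f hf using fun t => exists_gt ((idx t : T → K) t)
  refine ⟨f, fun g hg a => ?_⟩
  obtain ⟨b, hab, hb⟩ := hidx ⟨g, hg⟩ a
  exact ⟨b, hab, by simpa [hb] using hf b⟩

theorem lift_mk_lt_evenCof (hT : ∀ a : T, #(Iio a) < #T) (K : Type v) [Preorder K]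
    [NoMaxOrder K] [Nonempty K] : lift #T < evenCof T K := by
  have hcof : {c | ∃ D : Set (T → K), #D = c ∧
      ∀ f : T → K, ∃ g ∈ D, ∃ a : T, ∀ b : T, a ≤ b → f b ≤ g b}.Nonempty :=
    ⟨_, univ, rfl, fun f => ⟨f, mem_univ f, Classical.arbitrary T, fun _ _ => le_rfl⟩⟩
  obtain ⟨D, hD, hdom⟩ := csInf_mem hcof
  rw [evenCof, ← hD]
  by_contra! hle
  obtain ⟨g₀, hg₀, -⟩ := hdom fun _ => Classical.arbitrary K
  obtain ⟨f, hf⟩ := exists_frequently_gt_of_mk_le hT ⟨g₀, hg₀⟩ hle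
  obtain ⟨g, hg, a, hfg⟩ := hdom f
  obtain ⟨b, hab, hgf⟩ := hf g hg a
  exact (hfg b hab).not_gt hgf

end Diagonal

theorem stmt_1_general (k l : Cardinal) (hl : ℵ₀ ≤ l) (hreg : k.IsRegular) :
    Order.succ l ≤ evenCof l.ord.ToType k.ord.ToType := by
  have : Infinite l.ord.ToType := infinite_iff.mpr (by simpa [mk_toType] using hl)
  have : NoMaxOrder k.ord.ToType := noMaxOrder hreg.aleph0_le
  have : Nonempty k.ord.ToType := by
    rw [Ordinal.nonempty_toType_iff, Ne, ord_eq_zero]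
    exact hreg.pos.ne'
  have key := lift_mk_lt_evenCof (T := l.ord.ToType) (fun a => mk_Iio_lt a (by simp)) k.ord.ToType
  rw [lift_id', mk_toType, card_ord] at key
  exact key.succ_le

theorem stmt_1 (k l : Cardinal) (hkl : k ≤ l) (hl : ℵ₀ ≤ l) (hreg : k.IsRegular) :
    Order.succ l ≤ evenCof l.ord.ToType k.ord.ToType :=
  stmt_1_general k l hl hreg
end

section
/- For infinite cardinals κ ≤ λ, the cofinality of ⟨^λκ, ≤⟩ (everywhere domination) is at most the cofinality of ⟨^(λ⁺)κ, ≤*⟩ (eventual domination on functions from λ⁺ to κ). -/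
open Cardinal Order

/-!
Cut `λ⁺` into the intervals `[λ·(a+1), λ·(a+2))`, each of order type `λ`, and let `π γ = γ mod λ`
be the position inside the interval. Given `f : λ → κ`, a member `g` of an eventually dominating
family `D` dominates `f ∘ π` beyond some `a`, so `g` read along the interval after `a`
dominates `f` everywhere. The restrictions of members of `D` to the `λ⁺` intervals therefore form
an everywhere dominating family of size `|D| · λ⁺`, and `|D| · λ⁺ = |D|` because a diagonal
argument along the fibres of `π` gives `λ < |D|`.
-/

universe u

section Domination

variable {X Y K : Type u}

def IsEventuallyDominating [LE X] [LE K] (D : Set (X → K)) : Prop :=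
  ∀ f : X → K, ∃ g ∈ D, ∃ a : X, ∀ b : X, a ≤ b → f b ≤ g b

theorem exists_isEventuallyDominating_mk_eq_evenCof [LE X] [Nonempty X] [Preorder K] :
    ∃ D : Set (X → K), #D = evenCof X K ∧ IsEventuallyDominating D :=
  csInf_mem (s := {c | ∃ D : Set (X → K), #D = c ∧ IsEventuallyDominating D})
    ⟨_, Set.univ, rfl, fun f ↦ ⟨f, trivial, Classical.arbitrary X, fun _ _ ↦ le_rfl⟩⟩

theorem lt_mk_of_isEventuallyDominating [LE X] [Preorder K] [Nonempty K] [NoMaxOrder K]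
    {π : X → Y} (hπ : ∀ a y, ∃ b, a ≤ b ∧ π b = y) {D : Set (X → K)}
    (hD : IsEventuallyDominating D) : #Y < #D := by
  by_contra! hDY
  have : Nonempty D := by
    obtain ⟨g, hg, -⟩ := hD fun _ ↦ Classical.arbitrary K
    exact ⟨⟨g, hg⟩⟩
  obtain ⟨j⟩ := hDY
  -- `Function.invFun j ∘ π` lists every member of `D` along a cofinal fibre.
  choose f hf using fun x ↦ exists_gt (((Function.invFun j (π x) : D) : X → K) x)
  obtain ⟨g, hg, a, hga⟩ := hD f
  obtain ⟨y, hy⟩ := Function.invFun_surjective j.injective ⟨g, hg⟩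
  obtain ⟨b, hab, rfl⟩ := hπ a y
  exact (hf b).not_ge (by simpa [hy] using hga b hab)

theorem everyCof_le_mk_mul [LE X] [LE K] {π : X → Y} {c : X → Y → X}
    (hπc : ∀ a y, π (c a y) = y) (hc : ∀ a y, a ≤ c a y) {D : Set (X → K)}
    (hD : IsEventuallyDominating D) : everyCof Y K ≤ #D * #X := by
  let Φ : D × X → Y → K := fun p y ↦ (p.1 : X → K) (c p.2 y)
  calc everyCof Y K ≤ #(Set.range Φ) := csInf_le' ⟨_, rfl, fun f ↦ ?_⟩
    _ ≤ #(D × X) := mk_range_le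
    _ = #D * #X := by rw [mk_prod, lift_id, lift_id]
  obtain ⟨g, hg, a, hga⟩ := hD (f ∘ π)
  refine ⟨Φ (⟨g, hg⟩, a), ⟨_, rfl⟩, fun y ↦ ?_⟩
  simpa [Φ, hπc] using hga (c a y) (hc a y)

end Domination

open Ordinal

theorem mul_add_one_add_lt_ord {c : Cardinal} (hc : ℵ₀ ≤ c) {o q r : Ordinal}
    (ho : o < c.ord) (hq : q < c.ord) (hr : r < o) : o * (q + 1) + r < c.ord := by
  have h1 : (1 : Ordinal) < c.ord := by
    rw [lt_ord, card_one]
    exact one_lt_aleph0.trans_le hc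
  exact isPrincipal_add_ord hc (isPrincipal_mul_ord hc ho (isPrincipal_add_ord hc hq h1))
    (hr.trans ho)

theorem exists_blocks_ord_succ {l : Cardinal} (hl : ℵ₀ ≤ l) :
    ∃ (π : (succ l).ord.ToType → l.ord.ToType)
      (c : (succ l).ord.ToType → l.ord.ToType → (succ l).ord.ToType),
      (∀ a y, π (c a y) = y) ∧ ∀ a y, a ≤ c a y := by
  have hll : l.ord < (succ l).ord := ord_lt_ord.mpr (lt_succ l)
  have hl0 : 0 < l.ord := ord_pos.mpr (aleph0_pos.trans_le hl)
  refine ⟨fun x ↦ ToType.mk ⟨(x : Ordinal) % l.ord, mod_lt _ hl0.ne'⟩,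
    fun a y ↦ ToType.mk ⟨l.ord * ((a : Ordinal) + 1) + y,
      mul_add_one_add_lt_ord (hl.trans (le_succ l)) hll (ToType.mk.symm a).2
        (ToType.mk.symm y).2⟩,
    fun a y ↦ ?_, fun a y ↦ ?_⟩
  · apply ToType.mk.symm.injective
    ext
    simp only [OrderIso.symm_apply_apply, mul_add_mod_self]
    exact mod_eq_of_lt (ToType.mk.symm y).2
  · rw [← ToType.mk.symm.le_iff_le, ← Subtype.coe_le_coe, OrderIso.symm_apply_apply]
    calc (a : Ordinal) ≤ (a : Ordinal) + 1 := le_self_add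
      _ ≤ l.ord * ((a : Ordinal) + 1) := Ordinal.le_mul_right _ hl0
      _ ≤ l.ord * ((a : Ordinal) + 1) + y := le_self_add

theorem stmt_4 (k l : Cardinal) (hk : ℵ₀ ≤ k) (hkl : k ≤ l) :
    everyCof l.ord.ToType k.ord.ToType ≤ evenCof (Order.succ l).ord.ToType k.ord.ToType := by
  have hl : ℵ₀ ≤ l := hk.trans hkl
  have : NoMaxOrder k.ord.ToType := Cardinal.noMaxOrder hk
  have : Nonempty k.ord.ToType := by
    rw [← mk_ne_zero_iff, mk_toType, card_ord]
    exact (aleph0_pos.trans_le hk).ne'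
  have : Nonempty (succ l).ord.ToType := by
    rw [← mk_ne_zero_iff, mk_toType, card_ord]
    exact (succ_pos l).ne'
  obtain ⟨π, c, hπc, hc⟩ := exists_blocks_ord_succ hl
  obtain ⟨D, hDcard, hD⟩ := exists_isEventuallyDominating_mk_eq_evenCof
    (X := (succ l).ord.ToType) (K := k.ord.ToType)
  have hlD : l < #D := by
    simpa using lt_mk_of_isEventuallyDominating (fun a y ↦ ⟨c a y, hc a y, hπc a y⟩) hD
  rw [← hDcard]
  calc everyCof _ _ ≤ #D * #(succ l).ord.ToType := everyCof_le_mk_mul hπc hc hD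
    _ = #D := by
      rw [mk_toType, card_ord]
      exact mul_eq_left (hl.trans hlD.le) (succ_le_of_lt hlD) (succ_pos l).ne'
end

section
/- For infinite cardinals κ ≤ λ with λ regular, cf⟨^λκ, ≤⟩ equals the maximum of cf⟨^λκ, ≤*⟩ and the supremum over α < λ of cf⟨^ακ, ≤⟩ (i.e., the product/sum expression cf⟨^λκ,≤*⟩ · Σ_{α<λ} cf⟨^ακ,≤⟩ as cardinals). -/
open Cardinal Order

/-!
Write `L` for the initial ordinal of `λ` and `K` for that of `κ`. A function `f : L → K` is
eventually dominated, from some `a` on, by a member of a `≤*`-dominating family, and on the initial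
segment below `a`, of size `< λ`, it is dominated by a member of a pointwise dominating family for
that segment. Gluing the two gives a pointwise dominating family of size
`λ · cf⟨^λκ, ≤*⟩ · Σ_{α<λ} cf⟨^ακ, ≤⟩`. The factor `λ` is absorbed because `λ ≤ cf⟨^λκ, ≤*⟩`:
given fewer than `λ` functions, index `L` by pairs (function, point) and, at each point, exceed the
function it is labelled with; every function labels an unbounded set of points.
-/

universe u

section

variable {X Y K : Type u}

lemma exists_everyCof_family (X K : Type u) [Preorder K] :
    ∃ D : Set (X → K), #D = everyCof X K ∧ ∀ f : X → K, ∃ g ∈ D, ∀ x, f x ≤ g x :=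
  csInf_mem (⟨_, Set.univ, rfl, fun f => ⟨f, trivial, fun _ => le_rfl⟩⟩ :
    {c | ∃ D : Set (X → K), #D = c ∧ ∀ f : X → K, ∃ g ∈ D, ∀ x, f x ≤ g x}.Nonempty)

lemma exists_evenCof_family (X K : Type u) [LE X] [Nonempty X] [Preorder K] :
    ∃ D : Set (X → K), #D = evenCof X K ∧
      ∀ f : X → K, ∃ g ∈ D, ∃ a : X, ∀ b : X, a ≤ b → f b ≤ g b :=
  csInf_mem (⟨_, Set.univ, rfl,
      fun f => ⟨f, trivial, Classical.arbitrary X, fun _ _ => le_rfl⟩⟩ :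
    {c | ∃ D : Set (X → K), #D = c ∧
      ∀ f : X → K, ∃ g ∈ D, ∃ a : X, ∀ b : X, a ≤ b → f b ≤ g b}.Nonempty)

lemma everyCof_le [LE K] {D : Set (X → K)} (hD : ∀ f : X → K, ∃ g ∈ D, ∀ x, f x ≤ g x) :
    everyCof X K ≤ #D :=
  csInf_le' ⟨D, rfl, hD⟩

lemma evenCof_le [LE X] [LE K] {D : Set (X → K)}
    (hD : ∀ f : X → K, ∃ g ∈ D, ∃ a : X, ∀ b : X, a ≤ b → f b ≤ g b) :
    evenCof X K ≤ #D :=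
  csInf_le' ⟨D, rfl, hD⟩

lemma evenCof_le_everyCof [LE X] [Nonempty X] [Preorder K] :
    evenCof X K ≤ everyCof X K := by
  obtain ⟨D, hD, hdom⟩ := exists_everyCof_family X K
  rw [← hD]
  refine evenCof_le fun f => ?_
  obtain ⟨g, hg, hfg⟩ := hdom f
  exact ⟨g, hg, Classical.arbitrary X, fun b _ => hfg b⟩

lemma everyCof_mono [Preorder K] [Nonempty K] (h : #X ≤ #Y) :
    everyCof X K ≤ everyCof Y K := by
  obtain ⟨e⟩ := (Cardinal.le_def X Y).1 h
  obtain ⟨D, hD, hdom⟩ := exists_everyCof_family Y K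
  rw [← hD]
  refine (everyCof_le (D := (· ∘ e) '' D) fun f => ?_).trans mk_image_le
  obtain ⟨g, hg, hfg⟩ := hdom (Function.extend e f fun _ => Classical.arbitrary K)
  exact ⟨g ∘ e, Set.mem_image_of_mem _ hg, fun x => by
    simpa [e.injective.extend_apply] using hfg (e x)⟩

lemma everyCof_le_mk_mul_s6 [LinearOrder X] [Nonempty X] [Preorder K] {c : Cardinal}
    (hc : ∀ a : X, everyCof (Set.Iio a) K ≤ c) :
    everyCof X K ≤ #X * (evenCof X K * c) := by
  classical
  obtain ⟨E, hE, hEdom⟩ := exists_evenCof_family X K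
  choose B hB hBdom using fun a : X => exists_everyCof_family (Set.Iio a) K
  let glue (a : X) (p : E × B a) : X → K := fun x => if hx : x < a then p.2.1 ⟨x, hx⟩ else p.1.1 x
  have hdom : ∀ f : X → K, ∃ g ∈ ⋃ a, Set.range (glue a), ∀ x, f x ≤ g x := by
    intro f
    obtain ⟨g, hg, a, hfg⟩ := hEdom f
    obtain ⟨h, hh, hfh⟩ := hBdom a fun x => f x
    refine ⟨glue a (⟨g, hg⟩, ⟨h, hh⟩), Set.mem_iUnion.2 ⟨a, Set.mem_range_self _⟩, fun x => ?_⟩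
    by_cases hx : x < a
    · simpa [glue, hx] using hfh ⟨x, hx⟩
    · simpa [glue, hx] using hfg x (not_lt.1 hx)
  calc everyCof X K ≤ #(⋃ a, Set.range (glue a)) := everyCof_le hdom
    _ ≤ #X * ⨆ a, #(Set.range (glue a)) := mk_iUnion_le _
    _ ≤ #X * (evenCof X K * c) := by
      refine mul_le_mul_right (ciSup_le' fun a => mk_range_le.trans ?_) _
      rw [mk_prod, lift_id, lift_id, hE, hB a]
      exact mul_le_mul_right (hc a) _

lemma mk_le_evenCof [LinearOrder X] [Preorder K] [NoMaxOrder K] [Nonempty K]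
    (hX : ℵ₀ ≤ #X) (hIio : ∀ a : X, #(Set.Iio a) < #X) :
    #X ≤ evenCof X K := by
  have : Nonempty X := mk_ne_zero_iff.1 (aleph0_pos.trans_le hX).ne'
  obtain ⟨D, hD, hdom⟩ := exists_evenCof_family X K
  rw [← hD]
  by_contra! hDX
  obtain ⟨g₀, hg₀, -⟩ := hdom fun _ => Classical.arbitrary K
  have : Nonempty D := ⟨⟨g₀, hg₀⟩⟩
  obtain ⟨e⟩ : Nonempty (D × X ≃ X) := Cardinal.eq.1 <| by
    rw [mk_prod, lift_id, lift_id]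
    exact mul_eq_right hX hDX.le (mk_ne_zero _)
  choose f hf using fun b => exists_gt ((e.symm b).1.1 b)
  obtain ⟨g, hg, a, hfg⟩ := hdom f
  obtain ⟨x, hx⟩ : ∃ x, a ≤ e (⟨g, hg⟩, x) := by
    by_contra! h
    refine (hIio a).not_ge (mk_le_of_injective (f := fun x => ⟨e (⟨g, hg⟩, x), h x⟩) ?_)
    intro x y hxy
    simpa using congrArg Subtype.val hxy
  have := hf (e (⟨g, hg⟩, x))
  simp only [Equiv.symm_apply_apply] at this
  exact (hfg _ hx).not_gt this

end

section

variable {l : Cardinal.{u}} (K : Type u) [Preorder K] [Nonempty K]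

lemma everyCof_Iio_le_iSup (a : l.ord.ToType) :
    everyCof (Set.Iio a) K ≤ ⨆ o : Set.Iio l.ord, everyCof (o : Ordinal).ToType K :=
  (everyCof_mono (by rw [mk_toType, card_ord])).trans
    (le_ciSup Cardinal.bddAbove_of_small
      ⟨_, ord_lt_ord.2 (mk_ord_toType l ▸ mk_Iio_lt a (by simp))⟩)

lemma iSup_everyCof_le :
    ⨆ o : Set.Iio l.ord, everyCof (o : Ordinal).ToType K ≤ everyCof l.ord.ToType K :=
  ciSup_le' fun o => everyCof_mono <| by
    rw [mk_toType, mk_toType, card_ord]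
    exact (lt_ord.1 o.2).le

end

theorem stmt_6 (k l : Cardinal) (hk : ℵ₀ ≤ k) (hkl : k ≤ l) (hreg : l.IsRegular) :
    everyCof l.ord.ToType k.ord.ToType =
      max (evenCof l.ord.ToType k.ord.ToType)
        (⨆ a : Set.Iio l.ord, everyCof (a : Ordinal).ToType k.ord.ToType) := by
  have hl : ℵ₀ ≤ l := hk.trans hkl
  have : Nonempty l.ord.ToType :=
    mk_ne_zero_iff.1 ((mk_ord_toType l).symm ▸ (aleph0_pos.trans_le hl).ne')
  have : Nonempty k.ord.ToType :=
    mk_ne_zero_iff.1 ((mk_ord_toType k).symm ▸ (aleph0_pos.trans_le hk).ne')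
  have : NoMaxOrder k.ord.ToType := Cardinal.noMaxOrder hk
  set ec := evenCof l.ord.ToType k.ord.ToType
  set s := ⨆ a : Set.Iio l.ord, everyCof (a : Ordinal).ToType k.ord.ToType
  have hlec : l ≤ ec := by
    simpa using mk_le_evenCof (X := l.ord.ToType) (K := k.ord.ToType) (by simpa using hl)
      fun a => mk_Iio_lt a (by simp)
  refine le_antisymm ?_ (max_le evenCof_le_everyCof (iSup_everyCof_le _))
  calc everyCof l.ord.ToType k.ord.ToType ≤ l * (ec * s) := by
        simpa using everyCof_le_mk_mul_s6 (everyCof_Iio_le_iSup (l := l) k.ord.ToType)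
    _ ≤ l * max ec s := mul_le_mul_right (mul_le_max_of_aleph0_le_left (hl.trans hlec)) _
    _ ≤ max l (max ec s) := mul_le_max_of_aleph0_le_left hl
    _ = max ec s := max_eq_right (hlec.trans (le_max_left _ _))
end

section
/- Suppose F ⊆ ^λκ is a κ⁺-independent family of functions from λ to κ, where κ ≤ λ are infinite cardinals. Then every subset of F of cardinality κ is unbounded in the everywhere domination order on ^λκ: for every A ⊆ F with |A| = κ there is no g : λ → κ with f ≤ g for all f ∈ A. -/
/-!
Enumerate `A` by the `κ` values themselves: `κ⁺`-independence yields a point `x` at which the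
members of `A` take every value in `κ`. Since `κ` is infinite, as an ordinal it has no largest
element, so no `g x` can lie above all of these values.
-/

open Cardinal Order

theorem not_exists_forall_le_of_surjective_eval {X K : Type*} [Preorder K] [NoMaxOrder K]
    {A : Set (X → K)} {x : X} (hsurj : Function.Surjective fun f : A => (f : X → K) x) :
    ¬ ∃ g : X → K, ∀ f ∈ A, ∀ x, f x ≤ g x := by
  rintro ⟨g, hg⟩
  obtain ⟨y, hy⟩ := exists_gt (g x)
  obtain ⟨f, rfl⟩ := hsurj y
  exact (hg f f.2 x).not_gt hy

theorem stmt_8_general (k l : Cardinal) (hk : ℵ₀ ≤ k)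
    (F : Set (l.ord.ToType → k.ord.ToType))
    (hind : ∀ F₀ ⊆ F, #F₀ < Order.succ k →
      ∀ φ : F₀ → k.ord.ToType, ∃ x : l.ord.ToType, ∀ f : F₀, (f : l.ord.ToType → k.ord.ToType) x = φ f)
    (A : Set (l.ord.ToType → k.ord.ToType)) (hAF : A ⊆ F) (hA : #A = k) :
    ¬ ∃ g : l.ord.ToType → k.ord.ToType, ∀ f ∈ A, ∀ x, f x ≤ g x := by
  have := Cardinal.noMaxOrder hk
  obtain ⟨e⟩ : Nonempty (A ≃ k.ord.ToType) := Cardinal.eq.mp (by rw [hA, mk_ord_toType])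
  obtain ⟨x, hx⟩ := hind A hAF (hA.trans_lt (lt_succ k)) e
  exact not_exists_forall_le_of_surjective_eval (x := x) fun y => ⟨e.symm y, by simp [hx]⟩

theorem stmt_8 (k l : Cardinal) (hk : ℵ₀ ≤ k) (hkl : k ≤ l)
    (F : Set (l.ord.ToType → k.ord.ToType))
    (hind : ∀ F₀ ⊆ F, #F₀ < Order.succ k →
      ∀ φ : F₀ → k.ord.ToType, ∃ x : l.ord.ToType, ∀ f : F₀, (f : l.ord.ToType → k.ord.ToType) x = φ f)
    (A : Set (l.ord.ToType → k.ord.ToType)) (hAF : A ⊆ F) (hA : #A = k) :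
    ¬ ∃ g : l.ord.ToType → k.ord.ToType, ∀ f ∈ A, ∀ x, f x ≤ g x :=
  stmt_8_general k l hk F hind A hAF hA
end

section
/- If λ^κ = λ for infinite cardinals κ ≤ λ, then there exists a κ⁺-independent family F ⊆ ^λκ of cardinality 2^λ; i.e., |F| = 2^λ and for every subfamily F₀ of size ≤ κ and every φ : F₀ → κ there is x ∈ λ with f(x) = φ(f) for all f ∈ F₀. -/
/-!
Identify `λ` with the set of triples `d = (e, S, c) ∈ λ^κ × (𝒫 κ)^κ × κ^κ`, which is possible since
`λ^κ = λ`, and let `f_A(d) = c i` for some `i` with `e⁻¹(A) = S i`, or a fixed `k₀` if there is none.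
Constant probes `e ≡ x` detect whether `x ∈ A`, so `A ↦ f_A` is injective and there are `2^λ` such
functions. Given at most `κ` sets `A_i` with prescribed colours, a family `e` of `κ` points meeting
`A_i ∆ A_j` whenever `A_i ≠ A_j` makes the traces `e⁻¹(A_i)` separate the `A_i`, so
`d = (e, (e⁻¹(A_i))_i, (φ A_i)_i)` realises all the colours at once.
-/

open Cardinal Order

open Set

universe u w

section EngelkingKarlowicz

variable {K L : Type u}

lemma exists_separating_points {ι : Type w} [Nonempty L] (p : K → ι × ι)
    (hp : p.Surjective) (A : ι → Set L) :
    ∃ e : K → L, ∀ i j, e ⁻¹' A i = e ⁻¹' A j → A i = A j := by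
  have separate : ∀ m, ∃ x : L, A (p m).1 = A (p m).2 ∨ ¬(x ∈ A (p m).1 ↔ x ∈ A (p m).2) := by
    intro m
    by_cases hm : A (p m).1 = A (p m).2
    · exact ⟨Classical.arbitrary L, .inl hm⟩
    · obtain ⟨x, hx⟩ := not_forall.1 (mt Set.ext hm)
      exact ⟨x, .inr hx⟩
  choose e he using separate
  refine ⟨e, fun i j hij => ?_⟩
  obtain ⟨m, hm⟩ := hp (i, j)
  have hsep := he m
  rw [hm] at hsep
  exact hsep.resolve_right fun hx => hx (Set.ext_iff.1 hij m)

abbrev EKData (K L : Type u) : Type u := (K → L) × (K → Set K) × (K → K)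

open Classical in
noncomputable def ekColor (k₀ : K) (A : Set L) (d : EKData K L) : K :=
  if h : ∃ i, d.1 ⁻¹' A = d.2.1 i then d.2.2 h.choose else k₀

lemma ekColor_const_eq_iff [Nonempty K] {k₀ k₁ : K} (h : k₀ ≠ k₁) (A : Set L) (x : L) :
    ekColor k₀ A (fun _ => x, fun _ => univ, fun _ => k₁) = k₁ ↔ x ∈ A := by
  by_cases hx : x ∈ A
  · simp [ekColor, hx]
  · simp [ekColor, hx, h, empty_ne_univ]

lemma ekColor_injective [Nontrivial K] (k₀ : K) : Function.Injective (ekColor (L := L) k₀) := by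
  obtain ⟨k₁, h⟩ := exists_ne k₀
  intro A B hAB
  ext x
  rw [← ekColor_const_eq_iff h.symm A, ← ekColor_const_eq_iff h.symm B, hAB]

lemma exists_ekColor_eq [Infinite K] [Nonempty L] (k₀ : K) (A : K → Set L) (c : K → K)
    (hc : ∀ i j, A i = A j → c i = c j) : ∃ d, ∀ i, ekColor k₀ (A i) d = c i := by
  obtain ⟨p⟩ : Nonempty (K ≃ K × K) := by
    rw [← Cardinal.eq, mk_prod, lift_id, mul_eq_self (aleph0_le_mk K)]
  obtain ⟨e, he⟩ := exists_separating_points p p.surjective A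
  refine ⟨(e, fun i => e ⁻¹' A i, c), fun i => ?_⟩
  have h : ∃ j, e ⁻¹' A i = e ⁻¹' A j := ⟨i, rfl⟩
  rw [ekColor, dif_pos h]
  exact hc _ _ (he _ _ h.choose_spec).symm

lemma exists_ekColor_eq_of_mk_le [Infinite K] [Nonempty L] (k₀ : K) (S : Set (Set L))
    (hS : #S ≤ #K) (φ : S → K) : ∃ d, ∀ A : S, ekColor k₀ (A : Set L) d = φ A := by
  rcases isEmpty_or_nonempty S with hS₀ | hS₀
  · exact ⟨Classical.arbitrary _, isEmptyElim⟩
  obtain ⟨emb⟩ := hS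
  set g : K → S := Function.invFun emb
  obtain ⟨d, hd⟩ := exists_ekColor_eq k₀ (fun i => (g i : Set L)) (fun i => φ (g i))
    fun i j hij => congrArg φ (Subtype.ext hij)
  refine ⟨d, fun A => ?_⟩
  obtain ⟨i, rfl⟩ := Function.invFun_surjective emb.injective A
  exact hd i

end EngelkingKarlowicz

lemma mk_ekData {K L : Type u} [Infinite K] [Infinite L] (h : #L ^ #K = #L) :
    #(EKData K L) = #L := by
  have two_pow_le : (2 : Cardinal) ^ #K ≤ #L :=
    h ▸ power_le_power_right ((natCast_lt_aleph0 (n := 2)).le.trans (aleph0_le_mk L))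
  have hK := aleph0_le_mk K
  rw [mk_prod, mk_prod, mk_arrow, mk_arrow, mk_arrow, mk_set]
  simp only [lift_id, h, ← power_mul, mul_eq_self hK, power_self_eq hK]
  rw [mul_eq_self (hK.trans (cantor _).le),
    mul_eq_left (aleph0_le_mk L) two_pow_le (power_ne_zero _ two_ne_zero)]

theorem exists_independent_family {K L : Type u} [Infinite K] [Infinite L] (h : #L ^ #K = #L) :
    ∃ F : Set (L → K), #F = 2 ^ #L ∧
      ∀ F₀ ⊆ F, #F₀ ≤ #K → ∀ φ : F₀ → K, ∃ x, ∀ f : F₀, (f : L → K) x = φ f := by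
  obtain ⟨ee⟩ : Nonempty (L ≃ EKData K L) := Cardinal.eq.1 (mk_ekData h).symm
  obtain ⟨k₀⟩ : Nonempty K := inferInstance
  set G : Set L → L → K := fun A => ekColor k₀ A ∘ ee
  have hG : G.Injective := ee.surjective.injective_comp_right.comp (ekColor_injective k₀)
  refine ⟨range G, by rw [mk_range_eq G hG, mk_set], fun F₀ hF₀ hcard φ => ?_⟩
  obtain ⟨d, hd⟩ := exists_ekColor_eq_of_mk_le k₀ (G ⁻¹' F₀)
    ((mk_preimage_of_injective G F₀ hG).trans hcard) fun A => φ ⟨G A, A.2⟩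
  refine ⟨ee.symm d, fun ⟨f, hf⟩ => ?_⟩
  obtain ⟨A, rfl⟩ := hF₀ hf
  simpa [G] using hd ⟨A, hf⟩

theorem stmt_9 (k l : Cardinal) (hk : ℵ₀ ≤ k) (hl : ℵ₀ ≤ l) (h : l ^ k = l) :
    ∃ F : Set (l.ord.ToType → k.ord.ToType), #F = 2 ^ l ∧
      ∀ F₀ ⊆ F, #F₀ ≤ k →
        ∀ φ : F₀ → k.ord.ToType, ∃ x : l.ord.ToType,
          ∀ f : F₀, (f : l.ord.ToType → k.ord.ToType) x = φ f := by
  have : Infinite k.ord.ToType := infinite_iff.2 (by rwa [mk_ord_toType])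
  have : Infinite l.ord.ToType := infinite_iff.2 (by rwa [mk_ord_toType])
  simpa only [mk_ord_toType] using
    exists_independent_family (K := k.ord.ToType) (L := l.ord.ToType) (by simpa only [mk_ord_toType])
end

section
/- Assume there exists a κ⁺-independent family of 2^λ functions from λ to κ, where κ < 2^λ. Then no family D ⊆ ^λκ of cardinality < 2^λ is dominating in the everywhere domination order; hence cf(^λκ, ≤) = 2^λ. -/
open Cardinal Order

universe u

/-- The paper's `κ⁺`-independence: the subfamilies have size `≤ κ`, not `< κ`. -/
def IsIndependent {X K : Type u} (F : Set (X → K)) (κ : Cardinal.{u}) : Prop :=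
  ∀ F₀ ⊆ F, #F₀ ≤ κ → ∀ φ : F₀ → K, ∃ x, ∀ f : F₀, (f : X → K) x = φ f

namespace IsIndependent

variable {X K : Type u} [Preorder K] [NoMaxOrder K] {F : Set (X → K)} {κ : Cardinal.{u}}

/-- Realizing a bijection from `#K` members of `S` onto `K` at a point `x` makes `{f x | f ∈ S}`
all of `K`, which has no upper bound. -/
theorem not_bddAbove (hF : IsIndependent F κ) (hκ : #K ≤ κ) {S : Set (X → K)} (hSF : S ⊆ F)
    (hS : #K ≤ #S) : ¬ BddAbove S := by
  rintro ⟨g, hg⟩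
  obtain ⟨F₀, hF₀S, hF₀⟩ := le_mk_iff_exists_subset.1 hS
  obtain ⟨e⟩ : Nonempty (F₀ ≃ K) := Cardinal.eq.1 hF₀
  obtain ⟨x, hx⟩ := hF F₀ (hF₀S.trans hSF) (hF₀.trans_le hκ) e
  obtain ⟨z, hz⟩ := exists_gt (g x)
  have hzg : z ≤ g x :=
    calc z = e (e.symm z) := (e.apply_symm_apply z).symm
      _ = (e.symm z : X → K) x := (hx _).symm
      _ ≤ g x := hg (hF₀S (e.symm z).2) x
  exact hz.not_ge hzg

/-- Pigeonhole: sending each member of `F` to a bound in `D` has fibers of size `< #K`. -/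
theorem mk_le_mul (hF : IsIndependent F κ) (hκ : #K ≤ κ) {D : Set (X → K)}
    (hD : ∀ f ∈ F, ∃ g ∈ D, f ≤ g) : #F ≤ #D * #K := by
  choose g hgD hfg using hD
  let G : F → D := fun f => ⟨g f f.2, hgD f f.2⟩
  refine mk_le_mk_mul_of_mk_preimage_le G fun d => le_of_not_gt fun hd => ?_
  refine hF.not_bddAbove hκ (S := Subtype.val '' (G ⁻¹' {d})) ?_ ?_ ⟨d, ?_⟩
  · exact fun _ ⟨f, _, hf⟩ => hf ▸ f.2
  · rw [mk_image_eq Subtype.val_injective]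
    exact hd.le
  · rintro _ ⟨f, hf, rfl⟩
    exact (hfg f f.2).trans_eq (congrArg Subtype.val hf)

end IsIndependent

theorem everyCof_eq_mk_of_forall_not_dominating {X K : Type u} [Preorder K]
    (h : ∀ D : Set (X → K), #D < #(X → K) → ¬ ∀ f, ∃ g ∈ D, f ≤ g) :
    everyCof X K = #(X → K) := by
  have hmem : #(X → K) ∈ {c | ∃ D : Set (X → K), #D = c ∧ ∀ f : X → K, ∃ g ∈ D, ∀ x, f x ≤ g x} :=
    ⟨Set.univ, mk_univ, fun f => ⟨f, Set.mem_univ f, fun _ => le_rfl⟩⟩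
  refine le_antisymm (csInf_le' hmem) (le_csInf ⟨_, hmem⟩ ?_)
  rintro _ ⟨D, rfl, hD⟩
  exact le_of_not_gt fun hlt => h D hlt hD

theorem Cardinal.power_eq_two_power_of_le_two_power {κ μ : Cardinal} (hμ : ℵ₀ ≤ μ)
    (hκ₂ : 2 ≤ κ) (hκ : κ ≤ 2 ^ μ) : κ ^ μ = 2 ^ μ := by
  refine le_antisymm ?_ (power_le_power_right hκ₂)
  calc κ ^ μ ≤ (2 ^ μ) ^ μ := power_le_power_right hκ
    _ = 2 ^ μ := by rw [← power_mul, mul_eq_self hμ]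

theorem stmt_10 (k l : Cardinal) (hk : ℵ₀ ≤ k) (hl : ℵ₀ ≤ l) (hk2 : k < 2 ^ l)
    (F : Set (l.ord.ToType → k.ord.ToType)) (hF : #F = 2 ^ l)
    (hind : ∀ F₀ ⊆ F, #F₀ ≤ k →
      ∀ φ : F₀ → k.ord.ToType, ∃ x : l.ord.ToType,
        ∀ f : F₀, (f : l.ord.ToType → k.ord.ToType) x = φ f) :
    (∀ D : Set (l.ord.ToType → k.ord.ToType), #D < 2 ^ l →
      ¬ ∀ f : l.ord.ToType → k.ord.ToType, ∃ g ∈ D, ∀ x, f x ≤ g x) ∧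
    everyCof l.ord.ToType k.ord.ToType = 2 ^ l := by
  have : NoMaxOrder k.ord.ToType := noMaxOrder hk
  have hK : #k.ord.ToType = k := mk_ord_toType k
  have hcard : #(l.ord.ToType → k.ord.ToType) = 2 ^ l := by
    rw [← power_def, hK, mk_ord_toType]
    exact power_eq_two_power_of_le_two_power hl ((natCast_lt_aleph0 (n := 2)).le.trans hk) hk2.le
  have hsmall : ∀ D : Set (l.ord.ToType → k.ord.ToType), #D < 2 ^ l →
      ¬ ∀ f, ∃ g ∈ D, f ≤ g := by
    intro D hD hdom
    have hFD := IsIndependent.mk_le_mul hind hK.le fun f _ => hdom f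
    rw [hF, hK] at hFD
    exact hFD.not_gt (mul_lt_of_lt (hk.trans hk2.le) hD hk2)
  exact ⟨hsmall, hcard ▸ everyCof_eq_mk_of_forall_not_dominating (hcard ▸ hsmall)⟩
end

section
/- The cofinality of the set of all functions from ℝ to ℕ ordered by everywhere domination equals 2^(2^ℵ₀). -/
open Cardinal Order

/-!
Fix `e : X ≃ (ℕ → X)` and attach to `A ⊆ X` the function `x ↦ least n with (e x) n ∉ A`.
A single `g : X → ℕ` dominates at most `#X` of these functions: otherwise, always passing to
a point whose addition keeps more than `#X` members of the dominated family above the finite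
set built so far, one gets a sequence `s` such that for every `n` some dominated `A` contains
`s 0, …, s (n - 1)` but not `s n`, and then `g (e.symm s) ≥ n` for all `n`. Hence a dominating
family `D` satisfies `2 ^ #X ≤ #D * #X`, i.e. `2 ^ #X ≤ #D`.
-/

section

variable {X : Type*}

lemma mk_supersets_le_of_forall_insert (hX : ℵ₀ ≤ #X) (S : Set (Set X)) (t : Set X)
    (h : ∀ α, #{A ∈ S | insert α t ⊆ A} ≤ #X ∨ ∀ A ∈ S, t ⊆ A → α ∈ A) :
    #{A ∈ S | t ⊆ A} ≤ #X := by
  set G : Set X := {α | ¬ #{A ∈ S | insert α t ⊆ A} ≤ #X}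
  -- every superset of `t` in `S` contains `G`, so it is `G` itself or it meets `Gᶜ`
  have hcover : {A ∈ S | t ⊆ A} ⊆ insert G (⋃ α : ↥Gᶜ, {A ∈ S | insert α.1 t ⊆ A}) := by
    rintro A ⟨hAS, htA⟩
    by_cases hAG : A ⊆ G
    · exact .inl (hAG.antisymm fun α hα => (h α).resolve_left hα A hAS htA)
    · obtain ⟨α, hαA, hαG⟩ := Set.not_subset.mp hAG
      exact .inr (Set.mem_iUnion.mpr ⟨⟨α, hαG⟩, hAS, Set.insert_subset hαA htA⟩)
  have hsmall : ⨆ α : ↥Gᶜ, #{A ∈ S | insert α.1 t ⊆ A} ≤ #X :=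
    ciSup_le' fun α => not_not.mp α.2
  calc #{A ∈ S | t ⊆ A}
      ≤ #(⋃ α : ↥Gᶜ, {A ∈ S | insert α.1 t ⊆ A}) + 1 :=
        (mk_le_mk_of_subset hcover).trans mk_insert_le
    _ ≤ #↥Gᶜ * (⨆ α : ↥Gᶜ, #{A ∈ S | insert α.1 t ⊆ A}) + 1 := by
        gcongr; exact mk_iUnion_le _
    _ ≤ #X := add_le_of_le hX (mul_le_of_le hX (mk_set_le Gᶜ) hsmall)
        (one_le_aleph0.trans hX)

lemma exists_seq_of_lt_mk (hX : ℵ₀ ≤ #X) {S : Set (Set X)} (hS : #X < #S) :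
    ∃ s : ℕ → X, ∀ n, ∃ A ∈ S, (∀ k < n, s k ∈ A) ∧ s n ∉ A := by
  have step : ∀ t : Set X, #X < #{A ∈ S | t ⊆ A} →
      ∃ α, #X < #{A ∈ S | insert α t ⊆ A} ∧ ∃ A ∈ S, t ⊆ A ∧ α ∉ A := by
    intro t ht
    by_contra! hno
    exact ht.not_ge (mk_supersets_le_of_forall_insert hX S t fun α =>
      (le_or_gt _ _).imp_right fun hα A hAS htA => hno α hα A hAS htA)
  have : Nonempty X := (infinite_iff.mpr hX).nonempty
  choose! next hnext hwit using step
  let T : ℕ → Set X := fun n => (fun t => insert (next t) t)^[n] ∅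
  have hT_succ (n : ℕ) : T (n + 1) = insert (next (T n)) (T n) :=
    Function.iterate_succ_apply' _ _ _
  have hT_large (n : ℕ) : #X < #{A ∈ S | T n ⊆ A} := by
    induction n with
    | zero => simpa [T] using hS
    | succ n ih => rw [hT_succ]; exact hnext _ ih
  have hT_mono : Monotone T := monotone_nat_of_le_succ fun n => by
    rw [hT_succ]; exact Set.subset_insert _ _
  refine ⟨fun n => next (T n), fun n => ?_⟩
  obtain ⟨A, hAS, hTA, hnA⟩ := hwit _ (hT_large n)
  refine ⟨A, hAS, fun k hk => hTA (hT_mono hk ?_), hnA⟩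
  rw [hT_succ]; exact Set.mem_insert _ _

noncomputable def firstNotMem (s : ℕ → X) (A : Set X) : ℕ :=
  sInf {n | s n ∉ A}

lemma firstNotMem_eq {s : ℕ → X} {A : Set X} {n : ℕ} (hlt : ∀ k < n, s k ∈ A) (hn : s n ∉ A) :
    firstNotMem s A = n :=
  (Nat.sInf_le hn).antisymm <| not_lt.mp fun h =>
    Nat.sInf_mem (s := {k | s k ∉ A}) ⟨n, hn⟩ (hlt _ h)

lemma mk_setOf_firstNotMem_le_le (hX : ℵ₀ ≤ #X) (e : X ≃ (ℕ → X)) (g : X → ℕ) :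
    #{A : Set X | ∀ x, firstNotMem (e x) A ≤ g x} ≤ #X := by
  by_contra! hbig
  obtain ⟨s, hs⟩ := exists_seq_of_lt_mk hX hbig
  have hbound (n : ℕ) : n ≤ g (e.symm s) := by
    obtain ⟨A, hA, hlt, hn⟩ := hs n
    simpa [firstNotMem_eq hlt hn] using hA (e.symm s)
  exact (hbound (g (e.symm s) + 1)).not_gt (Nat.lt_succ_self _)

lemma two_power_le_mk_of_dominating (hX : ℵ₀ ≤ #X) (e : X ≃ (ℕ → X)) (D : Set (X → ℕ))
    (hD : ∀ f : X → ℕ, ∃ g ∈ D, ∀ x, f x ≤ g x) : 2 ^ #X ≤ #D := by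
  choose φ hφD hφ using fun A : Set X => hD fun x => firstNotMem (e x) A
  have hfiber (g : D) : #((fun A => (⟨φ A, hφD A⟩ : D)) ⁻¹' {g}) ≤ #X :=
    (mk_le_mk_of_subset fun A hA x => by
      rw [← congrArg Subtype.val (Set.mem_singleton_iff.mp hA)]; exact hφ A x).trans
      (mk_setOf_firstNotMem_le_le hX e g)
  have hcount : 2 ^ #X ≤ max (max #D #X) ℵ₀ :=
    mk_set.symm.trans_le ((mk_le_mk_mul_of_mk_preimage_le _ hfiber).trans (mul_le_max _ _))
  rcases le_max_iff.mp hcount with h | h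
  · exact (le_max_iff.mp h).resolve_right (cantor _).not_ge
  · exact absurd (h.trans hX) (cantor _).not_ge

lemma everyCof_le_mk {K : Type*} [Preorder K] : everyCof X K ≤ #(X → K) :=
  csInf_le' ⟨Set.univ, mk_univ, fun f => ⟨f, Set.mem_univ f, fun _ => le_rfl⟩⟩

theorem everyCof_nat_eq (hX : ℵ₀ ≤ #X) (hpow : #X ^ ℵ₀ = #X) : everyCof X ℕ = 2 ^ #X := by
  obtain ⟨e⟩ : Nonempty (X ≃ (ℕ → X)) := by
    rw [← Cardinal.eq]; simpa using hpow.symm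
  refine le_antisymm ?_ ?_
  · calc everyCof X ℕ ≤ #(X → ℕ) := everyCof_le_mk
      _ = 2 ^ #X := by
        simp only [mk_pi, mk_eq_aleph0, prod_const, lift_aleph0, lift_uzero]
        exact power_eq_two_power hX ofNat_le_aleph0 hX
  · exact le_csInf ⟨_, Set.univ, rfl, fun f => ⟨f, trivial, fun _ => le_rfl⟩⟩
      fun _ ⟨D, hcard, hD⟩ => hcard ▸ two_power_le_mk_of_dominating hX e D hD

end

theorem stmt_11 : everyCof ℝ ℕ = (2 : Cardinal) ^ ((2 : Cardinal) ^ (ℵ₀ : Cardinal)) := by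
  rw [two_power_aleph0, ← mk_real]
  exact everyCof_nat_eq (mk_real ▸ aleph0_le_continuum) (mk_real ▸ continuum_power_aleph0)
end

section
/- The Continuum Hypothesis (2^ℵ₀ = ℵ₁) implies that the cofinality of the everywhere domination order on functions ω₁ → ω equals 2^(ℵ₁). -/
/-!
Under CH the tree of binary sequences of countable length below `ω₁` has `ℵ₁` nodes, so a
function on `ω₁` may be read as a function on these nodes. Code `x : ω₁ → Bool` by the function
sending a node `(a, s)` to a natural-number label, injective on `a`, of the first place where
`s` departs from `x`. If `g` dominates the code of `y`, the first difference `b` of `x` and `y`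
satisfies `label b ≤ g (a, x ↾ a)` for every level `a > b`; so below each level only finitely many
functions branch off `x`, and by uncountable cofinality all of them branch off below a single
level, where `x` is then determined by its restriction. Hence each `g` dominates at most `ℵ₁`
codes, and a dominating family needs `2 ^ ℵ₁` members.
-/

open Cardinal Order

universe u v w

section EveryCof

variable {X : Type u} {K : Type w} [Preorder K]

theorem everyCof_le_mk_s12 {D : Set (X → K)} (hD : ∀ f : X → K, ∃ g ∈ D, ∀ x, f x ≤ g x) :
    everyCof X K ≤ #D :=
  csInf_le' ⟨D, rfl, hD⟩

theorem exists_dominating_mk_eq_everyCof :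
    ∃ D : Set (X → K), #D = everyCof X K ∧ ∀ f : X → K, ∃ g ∈ D, ∀ x, f x ≤ g x :=
  csInf_mem (s := {c | ∃ D : Set (X → K), #D = c ∧ ∀ f : X → K, ∃ g ∈ D, ∀ x, f x ≤ g x})
    ⟨_, Set.univ, rfl, fun f => ⟨f, Set.mem_univ f, fun _ => le_rfl⟩⟩

theorem everyCof_le_mk_pi : everyCof X K ≤ #(X → K) :=
  (everyCof_le_mk_s12 fun f => ⟨f, Set.mem_univ f, fun _ => le_rfl⟩).trans_eq mk_univ

theorem everyCof_le_everyCof_of_injective [Nonempty K] {Y : Type u} {e : Y → X}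
    (he : Function.Injective e) : everyCof Y K ≤ everyCof X K := by
  obtain ⟨D, hD_card, hD⟩ := exists_dominating_mk_eq_everyCof (X := X) (K := K)
  refine (everyCof_le_mk_s12 (D := (· ∘ e) '' D) fun f => ?_).trans (hD_card ▸ mk_image_le)
  obtain ⟨g, hg, hfg⟩ := hD (Function.extend e f fun _ => Classical.arbitrary K)
  refine ⟨g ∘ e, Set.mem_image_of_mem _ hg, fun y => ?_⟩
  simpa only [he.extend_apply, Function.comp_apply] using hfg (e y)

theorem mk_le_everyCof {ι : Type (max u w)} (F : ι → X → K) {μ : Cardinal}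
    (hι : ℵ₀ ≤ #ι) (hμ : μ < #ι) (hF : ∀ g : X → K, #{i // ∀ x, F i x ≤ g x} ≤ μ) :
    #ι ≤ everyCof X K := by
  obtain ⟨D, hD_card, hD⟩ := exists_dominating_mk_eq_everyCof (X := X) (K := K)
  choose Ψ hΨ using fun i => hD (F i)
  have hfiber (d : D) : #((fun i => (⟨Ψ i, (hΨ i).1⟩ : D)) ⁻¹' {d}) ≤ μ := by
    refine le_trans (mk_le_of_injective (f := fun i => (⟨i.1, ?_⟩ : {i // ∀ x, F i x ≤ d.1 x}))
      fun _ _ hij => Subtype.ext (Subtype.mk.inj hij)) (hF d)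
    have hi : Ψ i.1 = d := congrArg Subtype.val i.2
    exact hi ▸ (hΨ i.1).2
  rw [← hD_card]
  by_contra! hD_lt
  exact (mk_le_mk_mul_of_mk_preimage_le _ hfiber).not_gt (mul_lt_of_lt hι hD_lt hμ)

end EveryCof

theorem exists_forall_lt_of_mk_lt_cof {X : Type u} [LinearOrder X] {s : Set X}
    (hs : #s < cof X) : ∃ a, ∀ b ∈ s, b < a :=
  not_isCofinal_iff.1 fun hcof => (cof_le hcof).not_gt hs

theorem Set.finite_of_forall_finite_inter_Iio {X : Type u} [LinearOrder X] (hX : ℵ₀ < cof X)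
    {s : Set X} (hs : ∀ a, (s ∩ Set.Iio a).Finite) : s.Finite := by
  by_contra hinf
  obtain ⟨t, hts, ht⟩ := le_mk_iff_exists_subset.1 (infinite_iff.1 (Set.infinite_coe_iff.2 hinf))
  obtain ⟨a, ha⟩ := exists_forall_lt_of_mk_lt_cof (ht.trans_lt hX)
  have hfin : t.Finite := (hs a).subset fun b hb => ⟨hts hb, ha b hb⟩
  exact (lt_aleph0_iff_set_finite.2 hfin).ne ht

section Coding

variable {X : Type u} [LinearOrder X] {β : Type v}

abbrev TreeNode (X : Type u) [Preorder X] (β : Type v) : Type (max u v) := Σ a : X, (Set.Iio a → β)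

def IsFirstDiff (x y : X → β) (b : X) : Prop := (∀ c < b, x c = y c) ∧ x b ≠ y b

variable [WellFoundedLT X] (m : ∀ a : X, Set.Iio a → ℕ)

theorem exists_isFirstDiff {x y : X → β} (h : x ≠ y) : ∃ b, IsFirstDiff x y b := by
  obtain ⟨b, hb, hmin⟩ := wellFounded_lt.has_min {c | x c ≠ y c} (Function.ne_iff.1 h)
  exact ⟨b, fun c hc => by_contra fun hne => hmin c hne hc, hb⟩

open Classical in
noncomputable def firstDiffCode (x : X → β) (n : TreeNode X β) : ℕ :=
  if h : ∃ c, n.2 c ≠ x c then m n.1 (wellFounded_lt.min {c | n.2 c ≠ x c} h) else 0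

theorem firstDiffCode_domRestrict {x y : X → β} {a b : X} (hb : b < a)
    (hxy : IsFirstDiff x y b) : firstDiffCode m y ⟨a, (Set.Iio a).domRestrict x⟩ = m a ⟨b, hb⟩ := by
  have hmem : (⟨b, hb⟩ : Set.Iio a) ∈ {c | (Set.Iio a).domRestrict x c ≠ y c} := hxy.2
  rw [firstDiffCode, dif_pos ⟨_, hmem⟩]
  congr 1
  refine le_antisymm (wellFounded_lt.min_le hmem) (le_of_not_gt fun hlt => ?_)
  exact wellFounded_lt.min_mem _ ⟨_, hmem⟩ (hxy.1 _ hlt)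

variable {m}

/-- Each such first difference `b` is recorded, injectively, as `m a b ≤ g (a, x ↾ a)`. -/
theorem finite_isFirstDiff_inter_Iio (hm : ∀ a, Function.Injective (m a)) (g : TreeNode X β → ℕ)
    (x : X → β) (a : X) :
    ({b | ∃ y, (∀ n, firstDiffCode m y n ≤ g n) ∧ IsFirstDiff x y b} ∩ Set.Iio a).Finite := by
  have hfin := ((Set.finite_Iic (g ⟨a, (Set.Iio a).domRestrict x⟩)).preimage
    (hm a).injOn).image Subtype.val
  refine hfin.subset ?_
  rintro b ⟨⟨y, hy, hxy⟩, hb⟩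
  exact ⟨⟨b, hb⟩, (firstDiffCode_domRestrict m hb hxy).symm.trans_le (hy _), rfl⟩

theorem exists_isFirstDiff_bound (hX : ℵ₀ < cof X) (hm : ∀ a, Function.Injective (m a))
    (g : TreeNode X β → ℕ) (x : X → β) :
    ∃ a, ∀ y, (∀ n, firstDiffCode m y n ≤ g n) → ∀ b, IsFirstDiff x y b → b < a := by
  have hfin := Set.finite_of_forall_finite_inter_Iio hX (finite_isFirstDiff_inter_Iio hm g x)
  obtain ⟨a, ha⟩ := exists_forall_lt_of_mk_lt_cof ((lt_aleph0_iff_set_finite.2 hfin).trans hX)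
  exact ⟨a, fun y hy b hxy => ha b ⟨y, hy, hxy⟩⟩

/-- A function `x` whose code is dominated by `g` is determined by its restriction to any level
beyond all its first differences with other such functions. -/
theorem mk_firstDiffCode_dominated_le (hX : ℵ₀ < cof X) (hm : ∀ a, Function.Injective (m a))
    (g : TreeNode X β → ℕ) : #{x : X → β // ∀ n, firstDiffCode m x n ≤ g n} ≤ #(TreeNode X β) := by
  choose bound hbound using exists_isFirstDiff_bound hX hm g
  refine mk_le_of_injective (f := fun x => ⟨bound x, (Set.Iio (bound x)).domRestrict x.1⟩) ?_
  rintro ⟨x, hx⟩ ⟨y, hy⟩ hxy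
  refine Subtype.ext (by_contra fun hne => ?_)
  obtain ⟨b, hb⟩ := exists_isFirstDiff hne
  have hlt : b < bound x := hbound x y hy b hb
  have hlevel : bound x = bound y := congrArg Sigma.fst hxy
  have hlt' : b < bound y := hlevel ▸ hlt
  have := congrArg (fun n : TreeNode X β => if h : b < n.1 then n.2 ⟨b, h⟩ else x b) hxy
  simp only [dif_pos hlt, dif_pos hlt'] at this
  exact hb.2 this

end Coding

section OmegaOne

theorem two_power_aleph0_eq_aleph_one_transfer.{u₁, u₂}
    (h : (2 : Cardinal.{u₁}) ^ ℵ₀ = ℵ₁) : (2 : Cardinal.{u₂}) ^ ℵ₀ = ℵ₁ :=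
  lift_inj.{u₂, u₁}.1 (by simpa using congrArg lift.{u₂} h)

theorem cof_toType_ord_aleph_one : cof (aleph 1).ord.ToType = ℵ₁ := by
  rw [Ordinal.cof_toType, isRegular_aleph_one.cof_ord]

theorem countable_Iio_toType_ord_aleph_one (a : (aleph 1).ord.ToType) : (Set.Iio a).Countable := by
  refine le_aleph0_iff_set_countable.1 (lt_aleph_one_iff.1 ((mk_Iio_lt a ?_).trans_eq ?_))
  · rw [mk_ord_toType, Ordinal.type_toType]
  · exact mk_ord_toType _

theorem mk_treeNode_toType_ord_aleph_one_le (CH : (2 : Cardinal.{u}) ^ ℵ₀ = ℵ₁) :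
    #(TreeNode (aleph.{u} 1).ord.ToType Bool) ≤ ℵ₁ :=
  calc #(TreeNode (aleph.{u} 1).ord.ToType Bool)
      ≤ #(aleph 1).ord.ToType * ⨆ a : (aleph 1).ord.ToType, #(Set.Iio a → Bool) :=
        (mk_sigma _).trans_le (sum_le_mk_mul_iSup _)
    _ ≤ ℵ₁ * ℵ₁ := by
        refine mul_le_mul' (mk_ord_toType _).le (ciSup_le' fun a => ?_)
        rw [mk_arrow, mk_bool, lift_two, lift_uzero]
        exact (power_le_power_left two_ne_zero
          (le_aleph0_iff_set_countable.2 (countable_Iio_toType_ord_aleph_one a))).trans_eq CH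
    _ = ℵ₁ := mul_eq_self (aleph0_le_aleph 1)

end OmegaOne

theorem stmt_12 (CH : (2 : Cardinal) ^ ℵ₀ = aleph 1) :
    everyCof (aleph 1).ord.ToType ℕ = 2 ^ aleph 1 := by
  have CH := two_power_aleph0_eq_aleph_one_transfer CH
  have hcard : #(aleph 1).ord.ToType = ℵ₁ := mk_ord_toType _
  refine le_antisymm ?_ ?_
  · refine everyCof_le_mk_pi.trans_eq ?_
    rw [mk_arrow, mk_nat, lift_aleph0, lift_uzero, hcard]
    exact power_eq_two_power (aleph0_le_aleph 1) ofNat_lt_aleph0.le (aleph0_le_aleph 1)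
  · have hcof : ℵ₀ < cof (aleph 1).ord.ToType := by
      rw [cof_toType_ord_aleph_one]; exact aleph0_lt_aleph_one
    choose m hm using fun a => (countable_iff_exists_injective _).1
      (countable_Iio_toType_ord_aleph_one a).to_subtype
    obtain ⟨e⟩ := (le_def _ _).1 ((mk_treeNode_toType_ord_aleph_one_le CH).trans hcard.ge)
    have hpow : #((aleph 1).ord.ToType → Bool) = 2 ^ ℵ₁ := by
      rw [mk_arrow, mk_bool, lift_two, lift_uzero, hcard]
    calc 2 ^ ℵ₁ = #((aleph 1).ord.ToType → Bool) := hpow.symm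
      _ ≤ everyCof (TreeNode (aleph 1).ord.ToType Bool) ℕ := by
        refine mk_le_everyCof (firstDiffCode m) (μ := ℵ₁) ?_ ?_ fun g =>
          (mk_firstDiffCode_dominated_le hcof hm g).trans (mk_treeNode_toType_ord_aleph_one_le CH)
        · rw [hpow]; exact (aleph0_le_aleph 1).trans (cantor _).le
        · rw [hpow]; exact cantor _
      _ ≤ everyCof (aleph 1).ord.ToType ℕ := everyCof_le_everyCof_of_injective e.injective
end

section
/- For all infinite cardinals κ and λ, cf(^(λ^κ)κ, ≤) = 2^(λ^κ), i.e. the cofinality of the everywhere domination order on functions from λ^κ to κ equals 2^(λ^κ). -/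
open Cardinal Order

section Aux

variable {X K : Type u} [LinearOrder K]

attribute [local instance] Classical.propDecidable

/-- `A` is closed for `g` (via the coding equivalence `e`). -/
def IsGClosed (e : (K → X) ≃ X) (g : X → K) (A : Set X) : Prop :=
  ∀ s : K → X, (∀ j, j ≤ g (e s) → s j ∈ A) → ∀ j, s j ∈ A

/-- closure operator for `IsGClosed`. -/
def gcl (e : (K → X) ≃ X) (g : X → K) (Y : Set X) : Set X :=
  ⋂₀ {A : Set X | IsGClosed e g A ∧ Y ⊆ A}

variable {e : (K → X) ≃ X} {g : X → K} {Y Z A : Set X}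

lemma isGClosed_gcl : IsGClosed e g (gcl e g Y) := by
  intro s hs j
  rw [gcl, Set.mem_sInter]
  intro A hA
  exact hA.1 s (fun i hi => (hs i hi) A hA) j

lemma subset_gcl : Y ⊆ gcl e g Y :=
  fun _ hx => Set.mem_sInter.2 fun _ hA => hA.2 hx

lemma gcl_subset (hA : IsGClosed e g A) (hYA : Y ⊆ A) : gcl e g Y ⊆ A :=
  Set.sInter_subset_of_mem ⟨hA, hYA⟩

lemma gcl_mono (h : Y ⊆ Z) : gcl e g Y ⊆ gcl e g Z :=
  gcl_subset isGClosed_gcl (h.trans subset_gcl)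

variable [WellFoundedLT K]

/-- the set of values chosen before stage `i`. -/
def prior (y : K → X) (i : K) : Set X := {x | ∃ j, ∃ _ : j < i, y j = x}

/-- transfinitely pick new elements of `A` not yet captured by the closure. -/
noncomputable def gen [Nonempty X] (e : (K → X) ≃ X) (g : X → K) (A : Set X) : K → X :=
  (IsWellFounded.wf (α := K) (r := (· < ·))).fix fun i rec =>
    if h : (A \ gcl e g {x | ∃ j, ∃ hj : j < i, rec j hj = x}).Nonempty then h.some
    else Classical.arbitrary X

lemma gen_def [Nonempty X] (e : (K → X) ≃ X) (g : X → K) (A : Set X) (i : K) :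
    gen e g A i =
      if h : (A \ gcl e g (prior (gen e g A) i)).Nonempty then h.some
      else Classical.arbitrary X := by
  rw [gen, WellFounded.fix_eq]
  rfl

lemma exists_generator [Nonempty X] [Nonempty K] [NoMaxOrder K]
    (e : (K → X) ≃ X) (g : X → K) (A : Set X) (hA : IsGClosed e g A) :
    A = gcl e g ∅ ∨ ∃ y : K → X, gcl e g (Set.range y) = A := by
  by_contra hcon
  push_neg at hcon
  obtain ⟨h0, hgen⟩ := hcon
  set y : K → X := gen e g A with hy
  have main : ∀ i : K, y i ∈ A \ gcl e g (prior y i) := by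
    intro i
    induction i using WellFoundedLT.induction with
    | ind i ih =>
      have hsub : prior y i ⊆ A := by
        rintro x ⟨j, hj, rfl⟩
        exact (ih j hj).1
      have hne : (A \ gcl e g (prior y i)).Nonempty := by
        have h1 : gcl e g (prior y i) ⊆ A := gcl_subset hA hsub
        have h2 : gcl e g (prior y i) ≠ A := by
          rcases Set.eq_empty_or_nonempty (prior y i) with he | ⟨z0, hz0⟩
          · rw [he]
            exact fun h => h0 h.symm
          · intro hEq
            refine hgen (fun j => if h : j < i then y j else z0) ?_
            have hr : Set.range (fun j => if h : j < i then y j else z0) = prior y i := by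
              ext x
              constructor
              · rintro ⟨j, rfl⟩
                by_cases h : j < i
                · simp only [dif_pos h]
                  exact ⟨j, h, rfl⟩
                · simp only [dif_neg h]
                  exact hz0
              · rintro ⟨j, hj, rfl⟩
                exact ⟨j, dif_pos hj⟩
            rw [hr, hEq]
        exact Set.diff_nonempty.2 fun hsub2 => h2 (Set.Subset.antisymm h1 hsub2)
      rw [hy, gen_def e g A i, dif_pos hne]
      exact hne.some_mem
  -- contradiction using domination index
  obtain ⟨β', hβ'⟩ := exists_gt (g (e y))
  have hmem : ∀ j, y j ∈ gcl e g (prior y β') := by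
    apply isGClosed_gcl (e := e) (g := g) y
    intro j hj
    exact subset_gcl ⟨j, lt_of_le_of_lt hj hβ', rfl⟩
  exact (main β').2 (hmem β')

/-- counting the closed sets. -/
lemma card_gclosed_le [Nonempty X] [Nonempty K] [NoMaxOrder K]
    (e : (K → X) ≃ X) (g : X → K) :
    #{A : Set X // IsGClosed e g A} ≤ #(K → X) + 1 := by
  rw [← Cardinal.mk_option]
  refine Cardinal.mk_le_of_injective
    (f := fun A : {A : Set X // IsGClosed e g A} =>
      if h : ∃ y : K → X, gcl e g (Set.range y) = A.1 then some h.choose else none) ?_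
  rintro ⟨A, hA⟩ ⟨B, hB⟩ hab
  simp only at hab
  by_cases h1 : ∃ y : K → X, gcl e g (Set.range y) = A
  · by_cases h2 : ∃ y : K → X, gcl e g (Set.range y) = B
    · rw [dif_pos h1, dif_pos h2, Option.some_inj] at hab
      have := h1.choose_spec
      rw [hab, h2.choose_spec] at this
      exact Subtype.ext this.symm
    · rw [dif_pos h1, dif_neg h2] at hab
      exact absurd hab (Option.some_ne_none _)
  · by_cases h2 : ∃ y : K → X, gcl e g (Set.range y) = B
    · rw [dif_neg h1, dif_pos h2] at hab
      exact absurd hab.symm (Option.some_ne_none _)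
    · have hA0 := (exists_generator e g A hA).resolve_right h1
      have hB0 := (exists_generator e g B hB).resolve_right h2
      exact Subtype.ext (hA0.trans hB0.symm)

/-- the escape function: position of the first value of the coded sequence outside `A`. -/
noncomputable def escape [Nonempty K] (e : (K → X) ≃ X) (A : Set X) : X → K :=
  fun x =>
    if h : {i : K | (e.symm x) i ∉ A}.Nonempty then
      (IsWellFounded.wf (α := K) (r := (· < ·))).min _ h
    else Classical.arbitrary K

lemma isGClosed_of_escape_le [Nonempty K] (e : (K → X) ≃ X) (g : X → K) (A : Set X)
    (hle : ∀ x, escape e A x ≤ g x) : IsGClosed e g A := by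
  intro s hs j
  by_contra hj
  have hne : {i : K | (e.symm (e s)) i ∉ A}.Nonempty := by
    refine ⟨j, ?_⟩
    simpa using hj
  have hesc : escape e A (e s) =
      (IsWellFounded.wf (α := K) (r := (· < ·))).min _ hne := by
    simp only [escape]
    rw [dif_pos hne]
  have hmm := (IsWellFounded.wf (α := K) (r := (· < ·))).min_mem _ hne
  have hle' := hle (e s)
  rw [hesc] at hle'
  exact hmm (by simpa using hs _ hle')

end Aux

theorem stmt_13 (k l : Cardinal) (hk : ℵ₀ ≤ k) (hl : ℵ₀ ≤ l) :
    everyCof (l ^ k).ord.ToType k.ord.ToType = 2 ^ (l ^ k) := by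
  set μ := l ^ k with hμdef
  set X := μ.ord.ToType with hXdef
  set K := k.ord.ToType with hKdef
  have hmkX : #X = μ := Cardinal.mk_ord_toType μ
  have hmkK : #K = k := Cardinal.mk_ord_toType k
  have h2a : (2 : Cardinal) ≤ ℵ₀ := by exact_mod_cast (Cardinal.nat_lt_aleph0 2).le
  have h2l : (2 : Cardinal) ≤ l := le_trans h2a hl
  have h2k : (2 : Cardinal) ≤ k := le_trans h2a hk
  have hkμ : k ≤ μ := (Cardinal.cantor k).le.trans (Cardinal.power_le_power_right h2l)
  have hμinf : ℵ₀ ≤ μ := hk.trans hkμ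
  have hμk : μ ^ k = μ := by
    rw [hμdef, ← Cardinal.power_mul, Cardinal.mul_eq_self hk]
  have hkpow : k ^ μ = 2 ^ μ := by
    refine le_antisymm ?_ (Cardinal.power_le_power_right h2k)
    calc k ^ μ ≤ (2 ^ k) ^ μ := Cardinal.power_le_power_right (Cardinal.cantor k).le
      _ = 2 ^ (k * μ) := by rw [← Cardinal.power_mul]
      _ = 2 ^ μ := by rw [Cardinal.mul_eq_max hk hμinf, max_eq_right hkμ]
  haveI : Nonempty X := Cardinal.mk_ne_zero_iff.1
    (by rw [hmkX]; exact (Cardinal.aleph0_pos.trans_le hμinf).ne')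
  haveI : Nonempty K := Cardinal.mk_ne_zero_iff.1
    (by rw [hmkK]; exact (Cardinal.aleph0_pos.trans_le hk).ne')
  haveI : NoMaxOrder K := Cardinal.noMaxOrder hk
  have hKX : #(K → X) = #X := by
    rw [← Cardinal.power_def, hmkX, hmkK, hμk]
  obtain ⟨e⟩ := Cardinal.eq.1 hKX
  have hmem : (2 : Cardinal) ^ μ ∈
      {c | ∃ D : Set (X → K), #D = c ∧ ∀ f : X → K, ∃ g ∈ D, ∀ x, f x ≤ g x} := by
    refine ⟨Set.univ, ?_, fun f => ⟨f, Set.mem_univ f, fun x => le_rfl⟩⟩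
    rw [Cardinal.mk_univ, ← Cardinal.power_def, hmkX, hmkK, hkpow]
  rw [everyCof]
  refine le_antisymm (csInf_le' hmem) (le_csInf ⟨_, hmem⟩ ?_)
  rintro c ⟨D, hDc, hdom⟩
  have key : ∀ A : Set X, ∃ g, g ∈ D ∧ IsGClosed e g A := by
    intro A
    obtain ⟨g, hg, hle⟩ := hdom (escape e A)
    exact ⟨g, hg, isGClosed_of_escape_le e g A hle⟩
  choose Φ hΦD hΦcl using key
  let F : Set X → D := fun A => ⟨Φ A, hΦD A⟩
  have hfiber : ∀ d : D, #{A : Set X // F A = d} ≤ μ := by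
    intro d
    have h1 : #{A : Set X // F A = d} ≤ #{A : Set X // IsGClosed e d.1 A} := by
      refine Cardinal.mk_le_of_injective
        (f := fun p : {A : Set X // F A = d} =>
          (⟨p.1, by
            have := hΦcl p.1
            rwa [show Φ p.1 = d.1 from congrArg Subtype.val p.2] at this⟩ :
            {A : Set X // IsGClosed e d.1 A})) ?_
      intro p q hpq
      have : p.1 = q.1 := congrArg (fun r : {A : Set X // IsGClosed e d.1 A} => r.1) hpq
      exact Subtype.ext this
    refine h1.trans ((card_gclosed_le e d.1).trans ?_)
    rw [hKX, hmkX, Cardinal.add_one_eq hμinf]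
  have h1 : (2 : Cardinal) ^ μ ≤ c * μ := by
    have e1 : #(Set X) = 2 ^ μ := by rw [Cardinal.mk_set, hmkX]
    calc (2 : Cardinal) ^ μ = #(Set X) := e1.symm
      _ = #(Σ d : D, {A : Set X // F A = d}) := (Cardinal.mk_congr (Equiv.sigmaFiberEquiv F)).symm
      _ = Cardinal.sum (fun d : D => #{A : Set X // F A = d}) := Cardinal.mk_sigma _
      _ ≤ Cardinal.sum (fun _ : D => μ) := Cardinal.sum_le_sum _ _ hfiber
      _ = #D * μ := Cardinal.sum_const' _ _
      _ = c * μ := by rw [hDc]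
  rcases le_or_gt c μ with hcμ | hcμ
  · exfalso
    have : (2 : Cardinal) ^ μ ≤ μ := by
      refine h1.trans ?_
      calc c * μ ≤ μ * μ := mul_le_mul' hcμ le_rfl
        _ = μ := Cardinal.mul_eq_self hμinf
    exact absurd this (not_le.2 (Cardinal.cantor μ))
  · have hc : ℵ₀ ≤ c := hμinf.trans hcμ.le
    refine h1.trans ?_
    calc c * μ ≤ c * c := mul_le_mul' le_rfl hcμ.le
      _ = c := Cardinal.mul_eq_self hc
end

section
/- Let A ⊆ λ and define f : ^κλ → κ (on functions x : κ → λ) by f(x) = 0 if x(α) ∉ A for all α < κ, and f(x) = α + 1 if x(α) ∈ A and x(β) ∉ A for all β < α. For g : ^κλ → κ let B = { t ∈ ^{<κ}λ : g(x) ≥ dom(t) for all x : κ → λ extending t }. Then there is no g : ^κλ → κ dominating f everywhere such that for every t ∈ ^{<κ}λ all of whose initial segments lie in B and all of whose entries lie outside A, the set { a ∈ λ : t⌢⟨a⟩ ∈ B } differs from A. -/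
open Cardinal Order

noncomputable instance {o : Ordinal} : SuccOrder o.ToType :=
  SuccOrder.ofLinearWellFoundedLT o.ToType

/-- `t`, a function with domain `{b // b < a}` (an element of `^{<κ}λ`), belongs to the
tree `B` derived from `g`: every total function extending `t` is sent by `g` to a value
`≥ dom t = a`. -/
def inB {K L : Type*} [LinearOrder K] (g : (K → L) → K) (a : K)
    (t : {b : K // b < a} → L) : Prop :=
  ∀ x : K → L, (∀ b : {b : K // b < a}, x b = t b) → a ≤ g x

/-- `t⌢⟨c⟩` : the extension of `t : {b // b < a} → L` to domain `{b // b < succ a}`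
taking the value `c` at `a`. -/
noncomputable def snoc {K L : Type*} [LinearOrder K] [SuccOrder K]
    (a : K) (t : {b : K // b < a} → L) (c : L) : {b : K // b < Order.succ a} → L :=
  fun b => if h : (b : K) < a then t ⟨b, h⟩ else c

section build
attribute [local instance] Classical.propDecidable
variable {K L : Type*} [LinearOrder K] [WellFoundedLT K] [Nonempty L]

noncomputable def build (P : ∀ a : K, ({b : K // b < a} → L) → L → Prop) : K → L :=
  wellFounded_lt.fix (fun a IH =>
    if h : ∃ c, P a (fun b => IH b b.2) c then h.choose else Classical.arbitrary L)

lemma build_eq (P : ∀ a : K, ({b : K // b < a} → L) → L → Prop) (a : K) :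
    build P a = if h : ∃ c, P a (fun b : {b : K // b < a} => build P b) c then h.choose
      else Classical.arbitrary L := by
  rw [build, WellFounded.fix_eq]

lemma build_spec (P : ∀ a : K, ({b : K // b < a} → L) → L → Prop) (a : K)
    (hex : ∃ c, P a (fun b : {b : K // b < a} => build P b) c) :
    P a (fun b : {b : K // b < a} => build P b) (build P a) := by
  rw [build_eq, dif_pos hex]
  exact hex.choose_spec

end build

theorem stmt_14 (k l : Cardinal) (hk : ℵ₀ ≤ k) (hl : ℵ₀ ≤ l)
    (A : Set l.ord.ToType)
    (f : (k.ord.ToType → l.ord.ToType) → k.ord.ToType)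
    -- `f x = 0` (the least element) when no value of `x` lies in `A`
    (hf0 : ∀ x, (∀ α, x α ∉ A) → ∀ β, f x ≤ β)
    -- `f x = α + 1` when `α` is the least index with `x α ∈ A`
    (hf1 : ∀ x α, x α ∈ A → (∀ β < α, x β ∉ A) → f x = Order.succ α) :
    -- there is no `g` dominating `f` such that, for every `t` all of whose initial
    -- segments lie in `B` and whose entries lie outside `A`,
    -- the set `{ c | t⌢⟨c⟩ ∈ B }` differs from `A`
    ¬ ∃ g : (k.ord.ToType → l.ord.ToType) → k.ord.ToType,
        (∀ x, f x ≤ g x) ∧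
        ∀ (a : k.ord.ToType) (t : {b : k.ord.ToType // b < a} → l.ord.ToType),
          (∀ b, (h : b ≤ a) → inB g b (fun c => t ⟨c, lt_of_lt_of_le c.2 h⟩)) →
          (∀ b, t b ∉ A) →
          A ≠ {c | inB g (Order.succ a) (snoc a t c)} := by
  rintro ⟨g, hdom, hB⟩
  haveI : Nonempty l.ord.ToType := Ordinal.toType_nonempty_iff_ne_zero.2
    (Cardinal.isSuccLimit_ord hl).pos.ne'
  haveI : NoMaxOrder k.ord.ToType := by
    constructor
    intro a
    have hlim := Cardinal.isSuccLimit_ord hk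
    let e := Ordinal.ToType.mk (o := k.ord)
    refine ⟨e ⟨Order.succ ((e.symm a : Set.Iio k.ord) : Ordinal),
      Set.mem_Iio.2 (hlim.succ_lt (Set.mem_Iio.1 (e.symm a).2))⟩, ?_⟩
    conv_lhs => rw [← e.apply_symm_apply a]
    exact e.lt_iff_lt.2 (Subtype.mk_lt_mk.2 (Order.lt_succ _))
  set P : ∀ a : k.ord.ToType, ({b : k.ord.ToType // b < a} → l.ord.ToType) →
      l.ord.ToType → Prop :=
    fun a t c => c ∉ A ∧ inB g (Order.succ a) (snoc a t c) with hP
  set x : k.ord.ToType → l.ord.ToType := build P with hx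
  have key : ∀ a : k.ord.ToType, x a ∉ A ∧
      inB g (Order.succ a) (snoc a (fun b : {b : k.ord.ToType // b < a} => x b) (x a)) := by
    intro a
    induction a using WellFoundedLT.induction with
    | _ a IH =>
      have hin : ∀ b : k.ord.ToType, b ≤ a →
          inB g b (fun c : {c : k.ord.ToType // c < b} => x c) := by
        intro b hb y hy
        by_contra hgy
        push_neg at hgy
        have h2 := (IH (g y) (lt_of_lt_of_le hgy hb)).2
        have hext : ∀ c : {c : k.ord.ToType // c < Order.succ (g y)},
            y c = snoc (g y) (fun b : {b : k.ord.ToType // b < g y} => x b) (x (g y)) c := by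
          intro c
          by_cases hc : (c : k.ord.ToType) < g y
          · simp only [snoc, dif_pos hc]
            exact hy ⟨c, lt_of_lt_of_le hc hgy.le⟩
          · have hceq : (c : k.ord.ToType) = g y :=
              le_antisymm (Order.lt_succ_iff.1 c.2) (not_lt.1 hc)
            simp only [snoc, dif_neg hc]
            rw [hceq]
            exact hy ⟨g y, hgy⟩
        exact absurd (h2 y hext) (not_le.2 (Order.lt_succ (g y)))
      have hAsub : ∀ c ∈ A,
          inB g (Order.succ a) (snoc a (fun b : {b : k.ord.ToType // b < a} => x b) c) := by
        intro c hc y hy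
        have hya : y a = c := by
          have := hy ⟨a, Order.lt_succ a⟩
          simpa [snoc] using this
        have hfy : f y = Order.succ a := by
          refine hf1 y a (hya ▸ hc) fun β hβ => ?_
          have := hy ⟨β, hβ.trans (Order.lt_succ a)⟩
          simp only [snoc, dif_pos hβ] at this
          rw [this]
          exact (IH β hβ).1
        exact hfy ▸ hdom y
      have hex : ∃ c, P a (fun b : {b : k.ord.ToType // b < a} => x b) c := by
        have hne := hB a (fun b : {b : k.ord.ToType // b < a} => x b)
          (fun b hb => hin b hb) (fun b => (IH b b.2).1)
        by_contra hno
        push_neg at hno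
        apply hne
        ext c
        constructor
        · exact fun hc => hAsub c hc
        · intro hc
          by_contra hcA
          exact (hno c) ⟨hcA, hc⟩
      exact build_spec P a hex
  set a := g x with ha
  have h2 := (key a).2
  have hext : ∀ c : {c : k.ord.ToType // c < Order.succ a},
      x c = snoc a (fun b : {b : k.ord.ToType // b < a} => x b) (x a) c := by
    intro c
    by_cases hc : (c : k.ord.ToType) < a
    · simp [snoc, dif_pos hc]
    · have hceq : (c : k.ord.ToType) = a := le_antisymm (Order.lt_succ_iff.1 c.2) (not_lt.1 hc)
      simp [snoc, dif_neg hc, hceq]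
  exact absurd (h2 x hext) (not_le.2 (Order.lt_succ a))
end

section
/- Let R₋, R₊ be sets and R ⊆ R₋ × R₊ a relation, and suppose there is a set A = {a_α : α < κ} ⊆ R₋ of size κ such that no single b ∈ R₊ satisfies a_α R b for all α < κ. Let λ be a cardinal with λ^κ = λ. Then there is a family F ⊆ ^λR₋ of size 2^λ such that for every subfamily A' ⊆ F of size κ, there is no g ∈ ^λR₊ with (∀f ∈ A')(∀x ∈ λ) f(x) R g(x). In particular the 'dominating number' of the λ-fold conjunction relation is 2^λ (when |^λR₊| ≤ 2^λ). -/
/-!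
For `h : Λ → V` let `f_h` read a coordinate `s : K → K → Λ × V` as `K` lists of point–value
constraints and return `a α` for an `α` whose list `s α` is met by `h`. Given `K` distinct
functions `h_α`, choose for `α ≠ β` a point where `h_α` and `h_β` differ, and let `s α` record the
values of `h_α` at these points: then `s α` is met by `h_α` alone, so every `f_{h_α}` takes the
value `a α` at `s`, and a common response to the `f_{h_α}` would answer all of the `a α` at once.
Since `l ^ k = l`, the coordinates can be indexed by `l`, giving `2 ^ l` functions. A dominating
family of size `< 2 ^ l` would, by pigeonhole, dominate `k` of them by a single response.
-/

open Cardinal Order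

section IndependentFamily

variable {K I X M : Type*}

/-- The `κ⁺`-independent families of Engelking–Karłowicz, for `#K = κ`. -/
def IsIndependentFamily (a : K → M) (f : I → X → M) : Prop :=
  ∀ i : K → I, Function.Injective i → ∃ x, ∀ α, f (i α) x = a α

theorem IsIndependentFamily.comp_equiv {a : K → M} {f : I → X → M}
    (hf : IsIndependentFamily a f) {Y : Type*} (e : Y ≃ X) :
    IsIndependentFamily a fun i => f i ∘ e := fun i hi =>
  let ⟨x, hx⟩ := hf i hi
  ⟨e.symm x, by simpa using hx⟩

theorem IsIndependentFamily.not_exists_bound {N : Type*} {a : K → M} {f : I → X → M}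
    (hf : IsIndependentFamily a f) {R : M → N → Prop} (hunb : ¬ ∃ b, ∀ α, R (a α) b)
    {A : Set (X → M)} (hA : A ⊆ Set.range f) (e : K ≃ A) :
    ¬ ∃ g : X → N, ∀ φ ∈ A, ∀ x, R (φ x) (g x) := by
  rintro ⟨g, hg⟩
  choose i hi using fun α => hA (e α).2
  have hi_inj : Function.Injective i := fun α β hαβ =>
    e.injective <| Subtype.ext <| by rw [← hi, ← hi, hαβ]
  obtain ⟨x, hx⟩ := hf i hi_inj
  refine hunb ⟨g x, fun α => ?_⟩
  simpa [← hx α, hi] using hg _ (e α).2 x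

end IndependentFamily

theorem mk_le_mk_of_dominates {P Q : Type u} {S : P → Q → Prop} {F : Set P} {k : Cardinal}
    (hF : ℵ₀ ≤ #F) (hkF : k < #F) (hunb : ∀ A ⊆ F, #A = k → ¬ ∃ g, ∀ f ∈ A, S f g)
    {D : Set Q} (hD : ∀ f ∈ F, ∃ g ∈ D, S f g) : #F ≤ #D := by
  by_contra! hDF
  choose φ hφD hφS using fun f : F => hD f f.2
  let ψ : F → D := fun f => ⟨φ f, hφD f⟩
  obtain ⟨g, hg⟩ : ∃ g : D, k ≤ #(ψ ⁻¹' {g}) := by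
    by_contra! hsmall
    exact (mk_le_mk_mul_of_mk_preimage_le ψ fun g => (hsmall g).le).not_gt
      (mul_lt_of_lt hF hDF hkF)
  obtain ⟨A, hAg, hAk⟩ := le_mk_iff_exists_subset.mp hg
  refine hunb (Subtype.val '' A) (Subtype.coe_image_subset F A)
    (by rw [mk_image_eq Subtype.val_injective, hAk]) ⟨g, ?_⟩
  rintro _ ⟨f, hf, rfl⟩
  have hφf : φ f = g := congrArg Subtype.val (hAg hf)
  exact hφf ▸ hφS f

section EngelkingKarlowicz

variable {K Λ V M : Type*}

noncomputable def ekFamily [Nonempty K] (a : K → M) (h : Λ → V) (s : K → K → Λ × V) : M :=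
  a (Classical.epsilon fun α => ∀ β, h (s α β).1 = (s α β).2)

theorem ekFamily_eq_of_unique [Nonempty K] (a : K → M) {h : Λ → V} {s : K → K → Λ × V} {γ : K}
    (hγ : ∀ β, h (s γ β).1 = (s γ β).2)
    (huniq : ∀ α, (∀ β, h (s α β).1 = (s α β).2) → α = γ) :
    ekFamily a h s = a γ := by
  rw [ekFamily]
  exact congrArg a <| huniq _ <|
    Classical.epsilon_spec (p := fun α => ∀ β, h (s α β).1 = (s α β).2) ⟨γ, hγ⟩

theorem isIndependentFamily_ekFamily [Nonempty K] [Nonempty Λ] (a : K → M) :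
    IsIndependentFamily a (ekFamily (Λ := Λ) (V := V) a) := by
  intro h hh
  let z (α β : K) : Λ := Classical.epsilon fun w => h α w ≠ h β w
  refine ⟨fun α β => (z α β, h α (z α β)), fun γ => ekFamily_eq_of_unique a (fun _ => rfl) ?_⟩
  intro α hα
  by_contra hαγ
  exact Classical.epsilon_spec (Function.ne_iff.mp (hh.ne hαγ)) (hα γ).symm

theorem ekFamily_injective [Nontrivial K] {a : K → M} (ha : Function.Injective a) :
    Function.Injective (ekFamily (Λ := Λ) (V := V) a) := by
  classical
  intro h h' hhh'
  by_contra hne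
  obtain ⟨w, hw⟩ := Function.ne_iff.mp hne
  obtain ⟨α₀, α₁, h01⟩ := exists_pair_ne K
  let s : K → K → Λ × V := fun α _ => (w, if α = α₀ then h w else h' w)
  have hs : ekFamily a h s = a α₀ := by
    refine ekFamily_eq_of_unique a (by simp [s]) fun α hα => ?_
    by_contra hαα₀
    exact hw (by simpa [s, hαα₀] using hα α)
  have hs' : ekFamily a h' s ≠ a α₀ := by
    intro heq
    have hspec := Classical.epsilon_spec (p := fun α => ∀ β, h' (s α β).1 = (s α β).2)
      ⟨α₁, by simp [s, h01.symm]⟩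
    rw [ekFamily] at heq
    rw [ha heq] at hspec
    have hww : h' w = h w := by simpa [s] using hspec α₀
    exact hw hww.symm
  exact hs' (congrFun hhh' s ▸ hs)

theorem exists_injective_isIndependentFamily {K Λ : Type u} [Nontrivial K] {a : K → M}
    (ha : Function.Injective a) (hΛ : ℵ₀ ≤ #Λ) (hΛK : #Λ ^ #K = #Λ) :
    ∃ f : (Λ → Bool) → Λ → M, Function.Injective f ∧ IsIndependentFamily a f := by
  have : Nonempty Λ := (infinite_iff.mpr hΛ).nonempty
  have hΛ2 : #(Λ × Bool) = #Λ := by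
    simp only [mk_prod, lift_uzero, mk_fintype, Fintype.card_bool, Nat.cast_ofNat, lift_ofNat]
    exact Cardinal.mul_eq_left hΛ (ofNat_le_aleph0.trans hΛ) two_ne_zero
  have hindex : #Λ = #(K → K → Λ × Bool) := by
    rw [← power_def, ← power_def, hΛ2, hΛK, hΛK]
  obtain ⟨e⟩ := Cardinal.eq.mp hindex
  refine ⟨fun h => ekFamily a h ∘ e, fun h h' hhh' => ekFamily_injective ha ?_,
    (isIndependentFamily_ekFamily a).comp_equiv e⟩
  exact funext fun s => by simpa using congrFun hhh' (e.symm s)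

end EngelkingKarlowicz

theorem stmt_19 (Rm Rp : Type) (R : Rm → Rp → Prop) (k l : Cardinal)
    (hk : ℵ₀ ≤ k) (hl : ℵ₀ ≤ l) (hlk : l ^ k = l)
    (a : k.ord.ToType → Rm) (ha : Function.Injective a)
    (hunb : ¬ ∃ b : Rp, ∀ α, R (a α) b)
    -- every challenge is met by some response
    (htot : ∀ r : Rm, ∃ b : Rp, R r b) :
    ∃ F : Set (l.ord.ToType → Rm), #F = 2 ^ l ∧
      (∀ A' ⊆ F, #A' = k →
        ¬ ∃ g : l.ord.ToType → Rp, ∀ f ∈ A', ∀ x, R (f x) (g x)) ∧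
      -- in particular, the dominating number of the λ-fold conjunction is `2 ^ l`
      (#(l.ord.ToType → Rp) ≤ 2 ^ l →
        sInf {c | ∃ D : Set (l.ord.ToType → Rp), #D = c ∧
          ∀ f : l.ord.ToType → Rm, ∃ g ∈ D, ∀ x, R (f x) (g x)} = 2 ^ l) := by
  have hK : #k.ord.ToType = k := mk_ord_toType k
  have hΛ : #l.ord.ToType = l := mk_ord_toType l
  have : Nontrivial k.ord.ToType := one_lt_iff_nontrivial.mp <| by
    rw [hK]; exact one_lt_aleph0.trans_le hk
  obtain ⟨f, hf_inj, hf⟩ := exists_injective_isIndependentFamily ha (M := Rm)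
    (hΛ.symm ▸ hl) (by rw [hK, hΛ, hlk])
  have hF : #(Set.range f) = 2 ^ l := by
    simp [mk_range_eq f hf_inj, hΛ]
  have hF_unb : ∀ A ⊆ Set.range f, #A = k →
      ¬ ∃ g : l.ord.ToType → Rp, ∀ φ ∈ A, ∀ x, R (φ x) (g x) := fun A hA hAk =>
    hf.not_exists_bound hunb hA (Cardinal.eq.mp (hK.trans hAk.symm)).some
  have hk2l : k < 2 ^ l := calc
    k < 2 ^ k := cantor k
    _ ≤ l ^ k := power_le_power_right (ofNat_le_aleph0.trans hl)
    _ = l := hlk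
    _ < 2 ^ l := cantor l
  choose resp hresp using htot
  have huniv : #(Set.univ : Set (l.ord.ToType → Rp)) ∈ {c | ∃ D : Set (l.ord.ToType → Rp),
      #D = c ∧ ∀ f : l.ord.ToType → Rm, ∃ g ∈ D, ∀ x, R (f x) (g x)} :=
    ⟨Set.univ, rfl, fun f => ⟨resp ∘ f, trivial, fun x => hresp (f x)⟩⟩
  refine ⟨Set.range f, hF, hF_unb, fun hRp => le_antisymm ?_ ?_⟩
  · exact (csInf_le' huniv).trans (mk_univ.trans_le hRp)
  · refine le_csInf ⟨_, huniv⟩ ?_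
    rintro _ ⟨D, rfl, hD⟩
    exact hF ▸ mk_le_mk_of_dominates (hF ▸ hl.trans (cantor l).le) (hF ▸ hk2l) hF_unb
      fun φ _ => hD φ
end
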